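/- arXiv:2411.08080 — 5 statements merged into one kernel-verified Lean document; each statement's English description precedes it below -/
import Mathlib

section
/- Let a < b be real numbers and n ≥ 1 a natural number. Let k, κ : ℝ → ℝ be measurable, integrable on (0, b−a], and satisfy the modified Sonine condition of order n. Suppose k is (n−1)-times continuously differentiable on (0, b−a] with each derivative k⁽ʲ⁾ (0 ≤ j ≤ n−1) integrable on (0, b−a], and let f be n-times continuously differentiable on [a,b]. Then for every x ∈ (a,b] the left-sided general fractional Riemann–Liouville derivative of f at x exists and ᶜD_k f(x) = ᴿᴸD_k f(x) − Σ_{j=0}^{n−1} f⁽ʲ⁾(a) · k⁽ⁿ⁻ʲ⁻¹⁾(x−a); equivalently, ᶜD_k f(x) = ᴿᴸD_k [ f(·) − Σ_{j=0}^{n−1} f⁽ʲ⁾(a) (· − a)ʲ/j! ](x). -/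
/-!
After the substitution `u = y - s`, `∫_a^y k(y-s) h(s) ds = ∫_0^{y-a} k(u) h(y-u) du`, so
differentiating in `y` produces the boundary term `k(y-a) h(a)` from the moving upper limit and
`∫_a^y k(y-s) h'(s) ds` from differentiating under the integral sign (dominated convergence, `h`
being Lipschitz). Iterating this `m ≤ n` times, the `m`-th derivative of `x ↦ ∫_a^x k(x-s) f(s) ds`
is `∫_a^x k(x-s) f⁽ᵐ⁾(s) ds + ∑_{j<m} f⁽ʲ⁾(a) k⁽ᵐ⁻ʲ⁻¹⁾(x-a)`; for `m = n` this is the first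
identity. Subtracting from `f` its Taylor polynomial of degree `n - 1` at `a` does not change
`f⁽ⁿ⁾` and kills every boundary term, which gives the second identity.
-/

open MeasureTheory intervalIntegral Set Filter Topology
open scoped NNReal

section IteratedDerivWithin

variable {𝕜 F : Type*} [NontriviallyNormedField 𝕜] [NormedAddCommGroup F] [NormedSpace 𝕜 F]
  {s t : Set 𝕜} {f : 𝕜 → F} {Φ : ℕ → 𝕜 → F} {n m : ℕ} {x : 𝕜}

theorem eqOn_iteratedDerivWithin_of_hasDerivWithinAt (hs : UniqueDiffOn 𝕜 s) (hts : t ⊆ s)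
    (ht : ∀ x ∈ t, t ∈ 𝓝[s] x) (h0 : EqOn f (Φ 0) t)
    (hΦ : ∀ m < n, ∀ x ∈ t, HasDerivWithinAt (Φ m) (Φ (m + 1) x) s x) (hm : m ≤ n) :
    EqOn (iteratedDerivWithin m f s) (Φ m) t := by
  induction m with
  | zero => simpa using h0
  | succ m ih =>
    intro x hx
    have hEq : iteratedDerivWithin m f s =ᶠ[𝓝[s] x] Φ m :=
      mem_of_superset (ht x hx) (ih (by omega))
    rw [iteratedDerivWithin_succ, hEq.derivWithin_eq (ih (by omega) hx)]
    exact (hΦ m hm x hx).derivWithin (hs x (hts hx))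

theorem hasDerivWithinAt_iteratedDerivWithin_of_hasDerivWithinAt (hs : UniqueDiffOn 𝕜 s)
    (hts : t ⊆ s) (ht : ∀ x ∈ t, t ∈ 𝓝[s] x) (h0 : EqOn f (Φ 0) t)
    (hΦ : ∀ m < n, ∀ x ∈ t, HasDerivWithinAt (Φ m) (Φ (m + 1) x) s x) (hm : m < n)
    (hx : x ∈ t) : HasDerivWithinAt (iteratedDerivWithin m f s) (Φ (m + 1) x) s x :=
  have hEq := eqOn_iteratedDerivWithin_of_hasDerivWithinAt hs hts ht h0 hΦ hm.le
  (hΦ m hm x hx).congr_of_eventuallyEq (mem_of_superset (ht x hx) hEq) (hEq hx)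

end IteratedDerivWithin

section TaylorSum

noncomputable def taylorSum (c : ℕ → ℝ) (a : ℝ) (n : ℕ) (s : ℝ) : ℝ :=
  ∑ j ∈ Finset.range n, c j * (s - a) ^ j / j.factorial

variable (c : ℕ → ℝ) (a : ℝ)

@[simp]
theorem taylorSum_zero : taylorSum c a 0 = 0 := by
  ext; simp [taylorSum]

theorem taylorSum_succ_self (n : ℕ) : taylorSum c a (n + 1) a = c 0 := by
  simp [taylorSum, Finset.sum_range_succ']

theorem contDiff_taylorSum (n : ℕ) : ContDiff ℝ ⊤ (taylorSum c a n) := by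
  unfold taylorSum; fun_prop

theorem hasDerivAt_taylorSum_succ (n : ℕ) (s : ℝ) :
    HasDerivAt (taylorSum c a (n + 1)) (taylorSum (fun j => c (j + 1)) a n s) s := by
  have hterm (j : ℕ) : HasDerivAt (fun s => c (j + 1) * (s - a) ^ (j + 1) / (j + 1).factorial)
      (c (j + 1) * (s - a) ^ j / j.factorial) s := by
    refine ((((hasDerivAt_id' s).sub_const a).fun_pow (j + 1)).const_mul (c (j + 1))
      |>.div_const ((j + 1).factorial : ℝ)).congr_deriv ?_
    rw [Nat.factorial_succ, Nat.add_sub_cancel]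
    push_cast
    field_simp
  unfold taylorSum
  simp_rw [Finset.sum_range_succ' _ n]
  simpa using (HasDerivAt.fun_sum fun j _ => hterm j).add_const (c 0)

theorem deriv_taylorSum (n : ℕ) :
    deriv (taylorSum c a n) = taylorSum (fun j => c (j + 1)) a (n - 1) := by
  cases n with
  | zero => simp
  | succ n => funext s; exact (hasDerivAt_taylorSum_succ c a n s).deriv

theorem iteratedDeriv_taylorSum (m n : ℕ) :
    iteratedDeriv m (taylorSum c a n) = taylorSum (fun j => c (j + m)) a (n - m) := by
  induction m generalizing c n with
  | zero => simp
  | succ m ih =>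
    rw [iteratedDeriv_succ', deriv_taylorSum, ih]
    simp only [add_assoc, add_comm 1 m, Nat.sub_sub]

theorem iteratedDerivWithin_sub_taylorSum {f : ℝ → ℝ} {s : Set ℝ} {x : ℝ} {m n : ℕ}
    (hs : UniqueDiffOn ℝ s) (hf : ContDiffWithinAt ℝ m f s x) (hx : x ∈ s) :
    iteratedDerivWithin m (fun y => f y - taylorSum c a n y) s x =
      iteratedDerivWithin m f s x - taylorSum (fun j => c (j + m)) a (n - m) x := by
  have hP := contDiff_taylorSum c a n
  rw [← iteratedDeriv_taylorSum, ← iteratedDerivWithin_eq_iteratedDeriv hs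
    (hP.contDiffAt.of_le le_top) hx]
  exact iteratedDerivWithin_sub hx hs hf (hP.contDiffWithinAt.of_le le_top)

end TaylorSum

section Leibniz

variable {a b x : ℝ} {k g g' h : ℝ → ℝ} {M : ℝ≥0}

theorem Ioc_mem_nhdsWithin_Icc_of_mem (hx : x ∈ Ioc a b) : Ioc a b ∈ 𝓝[Icc a b] x :=
  mem_nhdsWithin.mpr ⟨Ioi a, isOpen_Ioi, hx.1, fun _ hy => ⟨hy.1, hy.2.2⟩⟩

theorem integral_sub_mul_eq_integral_mul_sub (k g : ℝ → ℝ) (a y : ℝ) :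
    ∫ s in a..y, k (y - s) * g s = ∫ u in 0..y - a, k u * g (y - u) := by
  simpa using integral_comp_sub_left (fun u => k u * g (y - u)) y (a := a) (b := y)

theorem tendsto_integral_mul_of_norm_le {ι : Type*} {l : Filter ι} {q : ι → ℝ → ℝ}
    {z : ι → ℝ} {p r c C : ℝ} (hk : IntegrableOn k (Icc p r)) (hc : c ∈ Icc p r)
    (hz : Tendsto z l (𝓝[Icc p r] c)) (hq : ∀ i u, ‖q i u‖ ≤ C) :
    Tendsto (fun i => ∫ u in c..z i, k u * q i u) l (𝓝 0) := by
  have hpr : p ≤ r := hc.1.trans hc.2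
  have hprim : ContinuousWithinAt (fun w => ∫ u in c..w, ‖k u‖) (Icc p r) c := by
    rw [← uIcc_of_le hpr] at hk hc ⊢
    exact continuousOn_primitive_interval' (IntegrableOn.intervalIntegrable hk.norm) hc c hc
  have hlim : Tendsto (fun i => |C * ∫ u in c..z i, ‖k u‖|) l (𝓝 0) := by
    simpa using ((hprim.tendsto.comp hz).const_mul C).abs
  refine squeeze_zero_norm' ?_ hlim
  filter_upwards [tendsto_nhdsWithin_iff.mp hz |>.2] with i hi
  rw [← intervalIntegral.integral_const_mul]
  refine norm_integral_le_abs_of_norm_le (Eventually.of_forall fun u => ?_) ?_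
  · rw [norm_mul, mul_comm]; gcongr; exact hq i u
  · exact ((hk.mono_set (uIcc_subset_Icc hc hi)).intervalIntegrable).norm.const_mul C

theorem LipschitzWith.norm_slope_sub_le (hg : LipschitzWith M g) (x y u : ℝ) :
    ‖(g (y - u) - g (x - u)) / (y - x)‖ ≤ M := by
  rcases eq_or_ne y x with rfl | hyx
  · simp
  rw [norm_div, div_le_iff₀ (norm_pos_iff.mpr (sub_ne_zero.mpr hyx))]
  simpa [dist_eq_norm] using hg.dist_le_mul (y - u) (x - u)

theorem tendsto_integral_mul_slope (hk : IntervalIntegrable k volume 0 (x - a)) (hax : a ≤ x)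
    (hg : LipschitzWith M g) (hg' : ∀ t ∈ Ioo a x, HasDerivAt g (g' t) t) :
    Tendsto (fun y => ∫ u in 0..x - a, k u * ((g (y - u) - g (x - u)) / (y - x))) (𝓝[≠] x)
      (𝓝 (∫ u in 0..x - a, k u * g' (x - u))) := by
  refine tendsto_integral_filter_of_dominated_convergence (fun u => M * ‖k u‖)
    (Eventually.of_forall fun y => ?_) ?_ (hk.norm.const_mul M) ?_
  · have := hg.continuous
    exact hk.def'.aestronglyMeasurable.mul (by fun_prop)
  · refine Eventually.of_forall fun y => Eventually.of_forall fun u _ => ?_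
    rw [norm_mul, mul_comm (M : ℝ)]
    gcongr
    exact hg.norm_slope_sub_le x y u
  · filter_upwards [Measure.ae_ne volume (x - a)] with u hu hmem
    rw [uIoc_of_le (sub_nonneg.mpr hax)] at hmem
    have ht : x - u ∈ Ioo a x := ⟨by linarith [lt_of_le_of_ne hmem.2 hu], by linarith [hmem.1]⟩
    have := hasDerivAt_iff_tendsto_slope.mp ((hg' _ ht).comp_sub_const x u)
    refine (this.const_mul (k u)).congr fun y => ?_
    rw [slope_def_field]

theorem hasDerivWithinAt_integral_mul_sub_sub (hk : IntegrableOn k (Icc 0 (b - a)))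
    (hg : LipschitzWith M g) (hg' : ∀ t ∈ Ioo a x, HasDerivAt g (g' t) t) (hx : x ∈ Ioc a b) :
    HasDerivWithinAt (fun y => ∫ u in 0..y - a, k u * (g (y - u) - g (x - u)))
      (∫ u in 0..x - a, k u * g' (x - u)) (Icc a b) x := by
  have hxa : x - a ∈ Icc 0 (b - a) := ⟨by linarith [hx.1], by linarith [hx.2]⟩
  have h0 : (0 : ℝ) ∈ Icc 0 (b - a) := ⟨le_rfl, hxa.1.trans hxa.2⟩
  have hya : ∀ y ∈ Icc a b, y - a ∈ Icc 0 (b - a) :=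
    fun y hy => ⟨by linarith [hy.1], by linarith [hy.2]⟩
  have hint : ∀ y, ∀ c ∈ Icc 0 (b - a), ∀ d ∈ Icc 0 (b - a),
      IntervalIntegrable (fun u => k u * ((g (y - u) - g (x - u)) / (y - x))) volume c d :=
    fun y c hc d hd => (hk.mono_set (uIcc_subset_Icc hc hd)).intervalIntegrable.mul_continuousOn
      (by have := hg.continuous; fun_prop)
  -- Split `∫_0^{y-a}` at `x - a`: dominated convergence on the fixed piece, while on the moving
  -- piece the slope of `g` is bounded by `M`.
  have hmain := (tendsto_integral_mul_slope (hk.mono_set (uIcc_subset_Icc h0 hxa)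
    ).intervalIntegrable hx.1.le hg hg').mono_left
    (nhdsWithin_mono x fun y (hy : y ∈ Icc a b \ {x}) => hy.2)
  have hz : Tendsto (· - a) (𝓝[Icc a b \ {x}] x) (𝓝[Icc 0 (b - a)] (x - a)) :=
    (continuousWithinAt_id.sub continuousWithinAt_const).tendsto_nhdsWithin
      fun y (hy : y ∈ Icc a b \ {x}) => hya y hy.1
  have htail := tendsto_integral_mul_of_norm_le hk hxa hz (hg.norm_slope_sub_le x)
  rw [hasDerivWithinAt_iff_tendsto_slope]
  have hsum := hmain.add htail
  rw [add_zero] at hsum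
  refine hsum.congr' ?_
  filter_upwards [self_mem_nhdsWithin] with y hy
  simp only [slope_def_field, sub_self, mul_zero, intervalIntegral.integral_zero, sub_zero,
    ← intervalIntegral.integral_div, mul_div_assoc]
  rw [integral_add_adjacent_intervals]
  · exact hint y 0 h0 _ hxa
  · exact hint y _ hxa _ (hya y hy.1)

theorem hasDerivWithinAt_integral_upper_sub_const
    (hh : IntegrableOn h (Icc 0 (b - a))) (hhx : ContinuousWithinAt h (Icc 0 (b - a)) (x - a))
    (hx : x ∈ Icc a b) :
    HasDerivWithinAt (fun y => ∫ u in 0..y - a, h u) (h (x - a)) (Icc a b) x := by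
  have hxa : x - a ∈ Icc 0 (b - a) := ⟨by linarith [hx.1], by linarith [hx.2]⟩
  have : Fact (x - a ∈ Icc 0 (b - a)) := ⟨hxa⟩
  have hFTC := integral_hasDerivWithinAt_right (s := Icc 0 (b - a)) (t := Icc 0 (b - a))
    (hh.mono_set (uIcc_subset_Icc ⟨le_rfl, hxa.1.trans hxa.2⟩ hxa)).intervalIntegrable
    ⟨Icc 0 (b - a), self_mem_nhdsWithin, hh.aestronglyMeasurable⟩ hhx
  have hmaps : MapsTo (· - a) (Icc a b) (Icc 0 (b - a)) :=
    fun y hy => ⟨by linarith [hy.1], by linarith [hy.2]⟩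
  simpa [Function.comp_def] using
    hFTC.comp x ((hasDerivAt_id x).sub_const a).hasDerivWithinAt hmaps

theorem hasDerivWithinAt_integral_sub_mul (hk : IntegrableOn k (Icc 0 (b - a)))
    (hkx : ContinuousWithinAt k (Icc 0 (b - a)) (x - a)) (hg : LipschitzWith M g)
    (hg' : ∀ t ∈ Ioo a x, HasDerivAt g (g' t) t) (hx : x ∈ Ioc a b) :
    HasDerivWithinAt (fun y => ∫ s in a..y, k (y - s) * g s)
      (k (x - a) * g a + ∫ s in a..x, k (x - s) * g' s) (Icc a b) x := by
  have hgc := hg.continuous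
  have hsplit : ∀ y ∈ Icc a b, ∫ s in a..y, k (y - s) * g s =
      (∫ u in 0..y - a, k u * (g (y - u) - g (x - u))) + ∫ u in 0..y - a, k u * g (x - u) := by
    intro y hy
    have hint (z : ℝ) : IntervalIntegrable (fun u => k u * g (z - u)) volume 0 (y - a) :=
      (hk.mono_set (uIcc_subset_Icc ⟨le_rfl, by linarith [hy.1, hy.2]⟩
        ⟨by linarith [hy.1], by linarith [hy.2]⟩)).intervalIntegrable.mul_continuousOn
        (by fun_prop)
    simp_rw [integral_sub_mul_eq_integral_mul_sub, mul_sub]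
    rw [intervalIntegral.integral_sub (hint y) (hint x), sub_add_cancel]
  have hFTC := hasDerivWithinAt_integral_upper_sub_const (h := fun u => k u * g (x - u))
    (hk.mul_continuousOn (by fun_prop) isCompact_Icc)
    (hkx.mul (by fun_prop)) (Ioc_subset_Icc_self hx)
  have hsum := (hasDerivWithinAt_integral_mul_sub_sub hk hg hg' hx).add hFTC
  rw [integral_sub_mul_eq_integral_mul_sub k g' a x, add_comm]
  simp only [sub_sub_cancel] at hsum
  exact hsum.congr hsplit (hsplit x (Ioc_subset_Icc_self hx))

theorem hasDerivWithinAt_integral_sub_mul_of_contDiffOn (hk : IntegrableOn k (Icc 0 (b - a)))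
    (hkx : ContinuousWithinAt k (Icc 0 (b - a)) (x - a)) (hh : ContDiffOn ℝ 1 h (Icc a b))
    (hx : x ∈ Ioc a b) :
    HasDerivWithinAt (fun y => ∫ s in a..y, k (y - s) * h s)
      (k (x - a) * h a + ∫ s in a..x, k (x - s) * derivWithin h (Icc a b) s) (Icc a b) x := by
  have hab : a < b := hx.1.trans_le hx.2
  have hd : DifferentiableOn ℝ h (Icc a b) := hh.differentiableOn one_ne_zero
  obtain ⟨C, hC⟩ := isCompact_Icc.exists_bound_of_continuousOn
    (hh.continuousOn_derivWithin (uniqueDiffOn_Icc hab) le_rfl)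
  -- Extend `h` to a Lipschitz function on `ℝ`: for `y < x` the difference quotients
  -- `(h (y - u) - h (x - u)) / (y - x)` sample `h` to the left of `a`.
  have hL : LipschitzOnWith C.toNNReal h (Icc a b) :=
    (convex_Icc a b).lipschitzOnWith_of_nnnorm_derivWithin_le hd fun s hs => by
      simpa only [norm_toNNReal] using Real.toNNReal_le_toNNReal (hC s hs)
  obtain ⟨g, hg, hgh⟩ := hL.extend_real
  have hg' : ∀ t ∈ Ioo a x, HasDerivAt g (derivWithin h (Icc a b) t) t := fun t ht =>
    have htI : Icc a b ∈ 𝓝 t := Icc_mem_nhds ht.1 (ht.2.trans_le hx.2)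
    ((hd t (Ioo_subset_Icc_self ⟨ht.1, ht.2.trans_le hx.2⟩)).hasDerivWithinAt.hasDerivAt htI
      ).congr_of_eventuallyEq (mem_of_superset htI fun s hs => (hgh hs).symm)
  have hgD := hasDerivWithinAt_integral_sub_mul hk hkx hg hg' hx
  rw [← hgh ⟨le_rfl, hab.le⟩] at hgD
  refine hgD.congr (fun y hy => integral_congr fun s hs => ?_) ?_
  · rw [hgh (uIcc_subset_Icc ⟨le_rfl, hab.le⟩ hy hs)]
  · exact integral_congr fun s hs => by
      rw [hgh (uIcc_subset_Icc ⟨le_rfl, hab.le⟩ (Ioc_subset_Icc_self hx) hs)]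

theorem hasDerivWithinAt_iteratedDerivWithin_sub_const {n j : ℕ}
    (hk : ContDiffOn ℝ n k (Ioc 0 (b - a))) (hj : j < n) (hx : x ∈ Ioc a b) :
    HasDerivWithinAt (fun y => iteratedDerivWithin j k (Ioc 0 (b - a)) (y - a))
      (iteratedDerivWithin (j + 1) k (Ioc 0 (b - a)) (x - a)) (Icc a b) x := by
  have hmaps : MapsTo (· - a) (Ioc a b) (Ioc 0 (b - a)) :=
    fun y hy => ⟨by linarith [hy.1], by linarith [hy.2]⟩
  have hd := hk.differentiableOn_iteratedDerivWithin (by exact_mod_cast hj)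
    (uniqueDiffOn_Ioc 0 (b - a)) (x - a) (hmaps hx)
  rw [iteratedDerivWithin_succ]
  simpa [Function.comp_def] using (hd.hasDerivWithinAt.comp x
    ((hasDerivAt_id x).sub_const a).hasDerivWithinAt hmaps).mono_of_mem_nhdsWithin
    (Ioc_mem_nhdsWithin_Icc_of_mem hx)

end Leibniz

noncomputable def convolutionIteratedDeriv (k f : ℝ → ℝ) (a b : ℝ) (m : ℕ) (x : ℝ) : ℝ :=
  (∫ s in a..x, k (x - s) * iteratedDerivWithin m f (Icc a b) s) +
    ∑ j ∈ Finset.range m, iteratedDerivWithin j f (Icc a b) a *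
      iteratedDerivWithin (m - j - 1) k (Ioc 0 (b - a)) (x - a)

section ConvolutionIteratedDeriv

variable {a b x : ℝ} {k f : ℝ → ℝ} {m n : ℕ}

theorem hasDerivWithinAt_convolutionIteratedDeriv (hk : IntegrableOn k (Icc 0 (b - a)))
    (hkC : ContDiffOn ℝ m k (Ioc 0 (b - a))) (hf : ContDiffOn ℝ (m + 1) f (Icc a b))
    (hx : x ∈ Ioc a b) :
    HasDerivWithinAt (convolutionIteratedDeriv k f a b m)
      (convolutionIteratedDeriv k f a b (m + 1) x) (Icc a b) x := by
  have hab : a < b := hx.1.trans_le hx.2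
  have hkx : ContinuousWithinAt k (Icc 0 (b - a)) (x - a) :=
    (hkC.continuousOn _ ⟨by linarith [hx.1], by linarith [hx.2]⟩).mono_of_mem_nhdsWithin
      (Ioc_mem_nhdsWithin_Icc_of_mem ⟨by linarith [hx.1], by linarith [hx.2]⟩)
  have hfm : ContDiffOn ℝ 1 (iteratedDerivWithin m f (Icc a b)) (Icc a b) :=
    ((contDiffOn_nat_succ_iff_contDiffOn_one_iteratedDerivWithin (uniqueDiffOn_Icc hab)).mp hf).2
  have hint := hasDerivWithinAt_integral_sub_mul_of_contDiffOn hk hkx hfm hx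
  have hsum := HasDerivWithinAt.fun_sum (u := Finset.range m) fun j hj =>
    (hasDerivWithinAt_iteratedDerivWithin_sub_const hkC (j := m - j - 1)
      (by have := Finset.mem_range.mp hj; omega) hx).const_mul (iteratedDerivWithin j f (Icc a b) a)
  refine (hint.add hsum).congr_deriv ?_
  have hindex : ∑ j ∈ Finset.range m, iteratedDerivWithin j f (Icc a b) a *
        iteratedDerivWithin (m + 1 - j - 1) k (Ioc 0 (b - a)) (x - a) =
      ∑ j ∈ Finset.range m, iteratedDerivWithin j f (Icc a b) a *
        iteratedDerivWithin (m - j - 1 + 1) k (Ioc 0 (b - a)) (x - a) :=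
    Finset.sum_congr rfl fun j hj => by
      rw [show m + 1 - j - 1 = m - j - 1 + 1 by have := Finset.mem_range.mp hj; omega]
  rw [convolutionIteratedDeriv, Finset.sum_range_succ, iteratedDerivWithin_succ,
    show m + 1 - m - 1 = 0 by omega, iteratedDerivWithin_zero, hindex]
  ring

theorem eqOn_iteratedDerivWithin_integral_sub_mul (hk : IntegrableOn k (Icc 0 (b - a)))
    (hkC : ContDiffOn ℝ (n - 1 : ℕ) k (Ioc 0 (b - a))) (hf : ContDiffOn ℝ n f (Icc a b))
    (hm : m ≤ n) :
    EqOn (iteratedDerivWithin m (fun t => ∫ s in a..t, k (t - s) * f s) (Icc a b))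
      (convolutionIteratedDeriv k f a b m) (Ioc a b) := fun x hx =>
  eqOn_iteratedDerivWithin_of_hasDerivWithinAt (Φ := convolutionIteratedDeriv k f a b)
    (uniqueDiffOn_Icc (hx.1.trans_le hx.2))
    Ioc_subset_Icc_self (fun _ hy => Ioc_mem_nhdsWithin_Icc_of_mem hy)
    (fun y _ => by simp [convolutionIteratedDeriv])
    (fun j hj _ hy => hasDerivWithinAt_convolutionIteratedDeriv hk
      (hkC.of_le (by norm_cast; omega)) (hf.of_le (by norm_cast)) hy) hm hx

theorem hasDerivWithinAt_iteratedDerivWithin_integral_sub_mul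
    (hk : IntegrableOn k (Icc 0 (b - a))) (hkC : ContDiffOn ℝ (n - 1 : ℕ) k (Ioc 0 (b - a)))
    (hf : ContDiffOn ℝ n f (Icc a b)) (hm : m < n) (hx : x ∈ Ioc a b) :
    HasDerivWithinAt (iteratedDerivWithin m (fun t => ∫ s in a..t, k (t - s) * f s) (Icc a b))
      (convolutionIteratedDeriv k f a b (m + 1) x) (Icc a b) x :=
  hasDerivWithinAt_iteratedDerivWithin_of_hasDerivWithinAt (Φ := convolutionIteratedDeriv k f a b)
    (uniqueDiffOn_Icc (hx.1.trans_le hx.2))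
    Ioc_subset_Icc_self (fun _ hy => Ioc_mem_nhdsWithin_Icc_of_mem hy)
    (fun y _ => by simp [convolutionIteratedDeriv])
    (fun j hj _ hy => hasDerivWithinAt_convolutionIteratedDeriv hk
      (hkC.of_le (by norm_cast; omega)) (hf.of_le (by norm_cast)) hy) hm hx

theorem convolutionIteratedDeriv_sub_taylorSum (hf : ContDiffOn ℝ n f (Icc a b))
    (hx : x ∈ Ioc a b) :
    convolutionIteratedDeriv k
        (fun s => f s - taylorSum (fun j => iteratedDerivWithin j f (Icc a b) a) a n s) a b n x =
      ∫ s in a..x, k (x - s) * iteratedDerivWithin n f (Icc a b) s := by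
  have hab : a < b := hx.1.trans_le hx.2
  have hsub : ∀ m ≤ n, ∀ s ∈ Icc a b,
      iteratedDerivWithin m
          (fun s => f s - taylorSum (fun j => iteratedDerivWithin j f (Icc a b) a) a n s)
          (Icc a b) s =
        iteratedDerivWithin m f (Icc a b) s -
          taylorSum (fun j => iteratedDerivWithin (j + m) f (Icc a b) a) a (n - m) s :=
    fun m hm s hs => iteratedDerivWithin_sub_taylorSum _ a (uniqueDiffOn_Icc hab)
      ((hf s hs).of_le (by exact_mod_cast hm)) hs
  rw [convolutionIteratedDeriv, Finset.sum_eq_zero, add_zero]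
  · refine integral_congr fun s hs => ?_
    rw [hsub n le_rfl s (uIcc_subset_Icc ⟨le_rfl, hab.le⟩ (Ioc_subset_Icc_self hx) hs)]
    simp
  · intro j hj
    have hjn := Finset.mem_range.mp hj
    rw [hsub j hjn.le a ⟨le_rfl, hab.le⟩, show n - j = n - j - 1 + 1 by omega,
      taylorSum_succ_self]
    simp

end ConvolutionIteratedDeriv

theorem caputo_eq_riemannLiouville_left_general
    (a b : ℝ) (n : ℕ)
    (k : ℝ → ℝ)
    (hkI : IntegrableOn k (Ioc 0 (b - a)))
    (hkC : ContDiffOn ℝ (n - 1) k (Ioc 0 (b - a)))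
    (f : ℝ → ℝ) (hf : ContDiffOn ℝ n f (Icc a b)) :
    ∀ x ∈ Ioc a b,
      (∀ j < n, DifferentiableWithinAt ℝ
          (iteratedDerivWithin j (fun t => ∫ s in a..t, k (t - s) * f s) (Icc a b))
          (Icc a b) x) ∧
      (∫ s in a..x, k (x - s) * iteratedDerivWithin n f (Icc a b) s) =
        iteratedDerivWithin n (fun t => ∫ s in a..t, k (t - s) * f s) (Icc a b) x
          - ∑ j ∈ Finset.range n,
              iteratedDerivWithin j f (Icc a b) a *
                iteratedDerivWithin (n - j - 1) k (Ioc 0 (b - a)) (x - a) ∧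
      (∫ s in a..x, k (x - s) * iteratedDerivWithin n f (Icc a b) s) =
        iteratedDerivWithin n
          (fun t => ∫ s in a..t, k (t - s) *
            (f s - ∑ j ∈ Finset.range n,
              iteratedDerivWithin j f (Icc a b) a * (s - a) ^ j / j.factorial))
          (Icc a b) x := by
  intro x hx
  have hk : IntegrableOn k (Icc 0 (b - a)) := (integrableOn_Icc_iff_integrableOn_Ioc).mpr hkI
  have hfP : ContDiffOn ℝ n
      (fun s => f s - taylorSum (fun j => iteratedDerivWithin j f (Icc a b) a) a n s) (Icc a b) :=
    hf.sub ((contDiff_taylorSum _ a n).contDiffOn.of_le le_top)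
  refine ⟨fun j hj =>
    (hasDerivWithinAt_iteratedDerivWithin_integral_sub_mul hk hkC hf hj hx).differentiableWithinAt,
    ?_, ?_⟩
  · rw [eqOn_iteratedDerivWithin_integral_sub_mul hk hkC hf le_rfl hx, convolutionIteratedDeriv,
      add_sub_cancel_right]
  · rw [← convolutionIteratedDeriv_sub_taylorSum hf hx]
    exact (eqOn_iteratedDerivWithin_integral_sub_mul hk hkC hfP le_rfl hx).symm

/-- **Relation between left-sided general fractional Caputo and Riemann–Liouville
derivatives.** If `(k, κ)` satisfy the modified Sonine condition of order `n` on
`(0, b-a]`, `k` is `(n-1)`-times continuously differentiable on `(0, b-a]` with integrable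
derivatives, and `f` is `n`-times continuously differentiable on `[a, b]`, then for every
`x ∈ (a, b]` the left RL derivative of `f` exists at `x` and
`ᶜD_k f(x) = ᴿᴸD_k f(x) − Σ_{j<n} f⁽ʲ⁾(a) k⁽ⁿ⁻ʲ⁻¹⁾(x-a)`, equivalently
`ᶜD_k f(x) = ᴿᴸD_k [f(·) − Σ_{j<n} f⁽ʲ⁾(a) (·-a)ʲ/j!](x)`. -/
theorem caputo_eq_riemannLiouville_left
    (a b : ℝ) (hab : a < b) (n : ℕ) (hn : 1 ≤ n)
    (k κ : ℝ → ℝ) (hkm : Measurable k) (hκm : Measurable κ)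
    (hkI : IntegrableOn k (Ioc 0 (b - a)))
    (hκI : IntegrableOn κ (Ioc 0 (b - a)))
    (hSonine : ∀ y, 0 < y → y ≤ b - a →
      ∫ s in (0:ℝ)..y, k (y - s) * κ s = y ^ (n - 1) / (n - 1).factorial)
    (hkC : ContDiffOn ℝ (n - 1) k (Ioc 0 (b - a)))
    (hkD : ∀ j ≤ n - 1,
      IntegrableOn (iteratedDerivWithin j k (Ioc 0 (b - a))) (Ioc 0 (b - a)))
    (f : ℝ → ℝ) (hf : ContDiffOn ℝ n f (Icc a b)) :
    ∀ x ∈ Ioc a b,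
      (∀ j < n, DifferentiableWithinAt ℝ
          (iteratedDerivWithin j (fun t => ∫ s in a..t, k (t - s) * f s) (Icc a b))
          (Icc a b) x) ∧
      (∫ s in a..x, k (x - s) * iteratedDerivWithin n f (Icc a b) s) =
        iteratedDerivWithin n (fun t => ∫ s in a..t, k (t - s) * f s) (Icc a b) x
          - ∑ j ∈ Finset.range n,
              iteratedDerivWithin j f (Icc a b) a *
                iteratedDerivWithin (n - j - 1) k (Ioc 0 (b - a)) (x - a) ∧
      (∫ s in a..x, k (x - s) * iteratedDerivWithin n f (Icc a b) s) =
        iteratedDerivWithin n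
          (fun t => ∫ s in a..t, k (t - s) *
            (f s - ∑ j ∈ Finset.range n,
              iteratedDerivWithin j f (Icc a b) a * (s - a) ^ j / j.factorial))
          (Icc a b) x :=
  caputo_eq_riemannLiouville_left_general a b n k hkI hkC f hf
end

section
/- (First fundamental theorem, left Riemann–Liouville case.) Let a < b be real numbers and n ≥ 1 a natural number. Let k, κ : ℝ → ℝ be measurable, integrable on (0, b−a], and satisfy the modified Sonine condition of order n. Then for every continuous function f : [a,b] → ℝ and every x ∈ (a,b], the left-sided general fractional Riemann–Liouville derivative of the left-sided general fractional integral of f exists at x and ᴿᴸD_k ( I_κ f )(x) = f(x). -/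
open MeasureTheory intervalIntegral Set

/-!
Extend `k`, `κ` by zero outside `[0, t - a]` and `f` by zero outside `[a, t]`. Then
`I_k (I_κ f) t` becomes an iterated integral over `ℝ²` of a convolution integrand times a
bounded factor, so Fubini applies and gives `I_k (I_κ f) = I_{k ⋆ κ} f`, where `⋆` is the
Laplace convolution. By the Sonine condition this is the Riemann–Liouville integral of integer
order `n`. The same composition law with `k = 1` gives Cauchy's formula for repeated
integration, so each derivative lowers that order by one, and the `n`-th derivative is `f`.
-/

noncomputable def leftFracIntegral (κ : ℝ → ℝ) (a : ℝ) (f : ℝ → ℝ) (x : ℝ) : ℝ :=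
  ∫ s in a..x, κ (x - s) * f s

noncomputable def laplaceConv (k κ : ℝ → ℝ) : ℝ → ℝ :=
  leftFracIntegral k 0 κ

noncomputable def powKernel (j : ℕ) (y : ℝ) : ℝ :=
  y ^ j / j.factorial

theorem indicator_Icc_sub_mul_eq_indicator {κ φ : ℝ → ℝ} {a t T : ℝ} (hφ : ∀ u < a, φ u = 0)
    (hT : t - a ≤ T) (u : ℝ) :
    (Icc 0 T).indicator κ (t - u) * φ u = (Icc a t).indicator (fun u => κ (t - u) * φ u) u := by
  by_cases hu : u ∈ Icc a t
  · rw [indicator_of_mem hu, indicator_of_mem (show t - u ∈ Icc 0 T from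
      ⟨by linarith [hu.2], by linarith [hu.1]⟩)]
  · rw [indicator_of_notMem hu]
    rcases lt_or_ge u a with hua | hua
    · rw [hφ u hua, mul_zero]
    · rw [indicator_of_notMem (fun h => hu ⟨hua, by linarith [h.1]⟩), zero_mul]

section

variable {f g k κ : ℝ → ℝ} {a s t T : ℝ}

theorem integral_indicator_sub_mul_indicator (hst : s ≤ t) (hT : t - a ≤ T) :
    ∫ u, (Icc 0 T).indicator κ (s - u) * (Icc a t).indicator g u
      = (Icc a t).indicator (leftFracIntegral κ a g) s := by
  have hG : ∀ u < a, (Icc a t).indicator g u = 0 := fun u hu =>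
    indicator_of_notMem (fun h => hu.not_ge h.1) g
  simp_rw [indicator_Icc_sub_mul_eq_indicator hG (by linarith : s - a ≤ T)]
  rw [MeasureTheory.integral_indicator measurableSet_Icc]
  rcases lt_or_ge s a with hsa | has
  · rw [Icc_eq_empty hsa.not_ge, setIntegral_empty,
      indicator_of_notMem (fun h => hsa.not_ge h.1)]
  · rw [indicator_of_mem (mem_Icc.2 ⟨has, hst⟩), integral_Icc_eq_integral_Ioc,
      ← integral_of_le has]
    refine integral_congr fun u hu => ?_
    rw [uIcc_of_le has] at hu
    simp only [indicator_of_mem (show u ∈ Icc a t from ⟨hu.1, hu.2.trans hst⟩)]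

theorem integral_indicator_sub_mul_indicator_sub (hT : t - s ≤ T) :
    ∫ v, (Icc 0 T).indicator k (t - v) * (Icc 0 T).indicator κ (v - s)
      = (Icc 0 T).indicator (laplaceConv k κ) (t - s) := by
  rw [laplaceConv, ← integral_indicator_sub_mul_indicator (a := 0) hT (by linarith),
    ← integral_sub_right_eq_self
      (fun v => (Icc 0 T).indicator k (t - s - v) * (Icc 0 T).indicator κ v) s]
  simp only [sub_sub_sub_cancel_right]

theorem integrable_sub_mul_sub_mul {K' K G : ℝ → ℝ} (hK' : Integrable K') (hK : Integrable K)
    (hG : AEStronglyMeasurable G) {C : ℝ} (hGC : ∀ u, ‖G u‖ ≤ C) (t : ℝ) :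
    Integrable (Function.uncurry fun u s => K' (t - s) * K (s - u) * G u) (volume.prod volume) :=
  (((hK'.comp_sub_left t).convolution_integrand (ContinuousLinearMap.mul ℝ ℝ) hK.comp_neg).mul_bdd
    (hG.comp_fst) (.of_forall fun p => hGC p.1)).congr
    (.of_forall fun p => by simp [Function.uncurry, neg_sub])

theorem leftFracIntegral_leftFracIntegral
    (hkI : IntegrableOn k (Ioc 0 (t - a))) (hκI : IntegrableOn κ (Ioc 0 (t - a)))
    (hg : Continuous g) (hat : a ≤ t) :
    leftFracIntegral k a (leftFracIntegral κ a g) t =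
      leftFracIntegral (laplaceConv k κ) a g t := by
  set K' := (Icc 0 (t - a)).indicator k
  set K := (Icc 0 (t - a)).indicator κ
  set G := (Icc a t).indicator g
  have hK' : ∀ s, t < s → K' (t - s) = 0 := fun s hs =>
    indicator_of_notMem (fun h => (sub_neg.2 hs).not_ge h.1) k
  have hG : ∀ u < a, G u = 0 := fun u hu => indicator_of_notMem (fun h => hu.not_ge h.1) g
  obtain ⟨C, hC⟩ := isCompact_Icc.exists_bound_of_continuousOn (hg.continuousOn (s := Icc a t))
  have hGC : ∀ u, ‖G u‖ ≤ max C 0 := fun u => by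
    by_cases hu : u ∈ Icc a t
    · simpa [G, hu] using (hC u hu).trans (le_max_left C 0)
    · simp [G, hu]
  have hint := integrable_sub_mul_sub_mul
    ((integrable_indicator_iff measurableSet_Icc).2
      ((integrableOn_Icc_iff_integrableOn_Ioc).2 hkI))
    ((integrable_indicator_iff measurableSet_Icc).2
      ((integrableOn_Icc_iff_integrableOn_Ioc).2 hκI))
    (hg.measurable.indicator measurableSet_Icc).aestronglyMeasurable hGC t
  have hL : leftFracIntegral k a (leftFracIntegral κ a g) t
      = ∫ s, ∫ u, K' (t - s) * K (s - u) * G u := by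
    rw [← indicator_of_mem (right_mem_Icc.2 hat) (leftFracIntegral k a _),
      ← integral_indicator_sub_mul_indicator le_rfl le_rfl]
    refine integral_congr_ae (.of_forall fun s => ?_)
    rcases le_or_gt s t with hst | hts
    · simp only [mul_assoc, MeasureTheory.integral_const_mul,
        integral_indicator_sub_mul_indicator hst le_rfl, K, K', G]
    · simp only [hK' s hts, zero_mul, MeasureTheory.integral_zero]
      exact mul_eq_zero_of_left (hK' s hts) _
  have hR : leftFracIntegral (laplaceConv k κ) a g t
      = ∫ u, ∫ s, K' (t - s) * K (s - u) * G u := by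
    rw [← indicator_of_mem (right_mem_Icc.2 hat) (leftFracIntegral _ a g),
      ← integral_indicator_sub_mul_indicator le_rfl le_rfl]
    refine integral_congr_ae (.of_forall fun u => ?_)
    rcases lt_or_ge u a with hua | hau
    · simp only [hG u hua, mul_zero, MeasureTheory.integral_zero]
      exact mul_eq_zero_of_right _ (hG u hua)
    · simp only [MeasureTheory.integral_mul_const,
        integral_indicator_sub_mul_indicator_sub (by linarith : t - u ≤ t - a), K, K', G]
  rw [hL, hR, integral_integral_swap hint]

theorem leftFracIntegral_congr (hax : a ≤ t) (h : EqOn g f (Icc a t)) :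
    leftFracIntegral κ a g t = leftFracIntegral κ a f t :=
  integral_congr fun s hs => by
    rw [uIcc_of_le hax] at hs
    simp only [h hs]

theorem leftFracIntegral_congr_kernel {κ' : ℝ → ℝ} (hax : a ≤ t)
    (h : EqOn κ κ' (Ioo 0 (t - a))) :
    leftFracIntegral κ a g t = leftFracIntegral κ' a g t := by
  simp only [leftFracIntegral, integral_of_le hax, integral_Ioc_eq_integral_Ioo]
  exact setIntegral_congr_fun measurableSet_Ioo fun s hs => by
    rw [h ⟨by linarith [hs.2], by linarith [hs.1]⟩]

theorem continuous_leftFracIntegral (hκ : Continuous κ) (hg : Continuous g) :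
    Continuous (leftFracIntegral κ a g) :=
  (continuous_parametric_primitive_of_continuous (f := fun x s => κ (x - s) * g s) (a₀ := a)
    (by fun_prop)).comp (continuous_id.prodMk continuous_id)

theorem continuous_powKernel (j : ℕ) : Continuous (powKernel j) :=
  (continuous_pow j).div_const _

theorem laplaceConv_powKernel_zero (j : ℕ) :
    laplaceConv (powKernel 0) (powKernel j) = powKernel (j + 1) := by
  ext y
  simp only [laplaceConv, leftFracIntegral, powKernel, pow_zero, Nat.factorial_zero,
    Nat.cast_one, div_one, one_mul]
  rw [intervalIntegral.integral_div, integral_pow, Nat.factorial_succ, zero_pow j.succ_ne_zero,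
    sub_zero]
  push_cast
  field_simp

theorem leftFracIntegral_powKernel_zero :
    leftFracIntegral (powKernel 0) a g = fun x => ∫ s in a..x, g s := by
  ext x
  simp [leftFracIntegral, powKernel]

theorem hasDerivAt_leftFracIntegral_powKernel_zero (hg : Continuous g) (t : ℝ) :
    HasDerivAt (leftFracIntegral (powKernel 0) a g) (g t) t := by
  rw [leftFracIntegral_powKernel_zero]
  exact (hg.integral_hasStrictDerivAt a t).hasDerivAt

theorem hasDerivWithinAt_leftFracIntegral_powKernel_succ (hg : Continuous g) (j : ℕ)
    (hat : a ≤ t) :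
    HasDerivWithinAt (leftFracIntegral (powKernel (j + 1)) a g)
      (leftFracIntegral (powKernel j) a g t) (Ici a) t := by
  have hcauchy : EqOn (leftFracIntegral (powKernel (j + 1)) a g)
      (leftFracIntegral (powKernel 0) a (leftFracIntegral (powKernel j) a g)) (Ici a) :=
    fun x (hx : a ≤ x) => by
      rw [← laplaceConv_powKernel_zero, leftFracIntegral_leftFracIntegral
        ((continuous_powKernel 0).integrableOn_Ioc) ((continuous_powKernel j).integrableOn_Ioc)
        hg hx]
  exact (hasDerivAt_leftFracIntegral_powKernel_zero
    (continuous_leftFracIntegral (continuous_powKernel j) hg) t).hasDerivWithinAt.congr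
    hcauchy (hcauchy hat)

theorem differentiableWithinAt_leftFracIntegral_powKernel (hg : Continuous g) (j : ℕ)
    (hat : a ≤ t) : DifferentiableWithinAt ℝ (leftFracIntegral (powKernel j) a g) (Ici a) t := by
  cases j with
  | zero =>
    exact (hasDerivAt_leftFracIntegral_powKernel_zero hg t).differentiableAt.differentiableWithinAt
  | succ j =>
    exact (hasDerivWithinAt_leftFracIntegral_powKernel_succ hg j hat).differentiableWithinAt

theorem iteratedDerivWithin_leftFracIntegral_powKernel {s : Set ℝ} (hs : UniqueDiffOn ℝ s)
    (hsa : s ⊆ Ici a) (hg : Continuous g) (m i : ℕ) :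
    EqOn (iteratedDerivWithin i (leftFracIntegral (powKernel (m + i)) a g) s)
      (leftFracIntegral (powKernel m) a g) s := by
  induction i generalizing m with
  | zero => intro x _; rw [iteratedDerivWithin_zero, add_zero]
  | succ i ih =>
    intro x hx
    rw [iteratedDerivWithin_succ, show m + (i + 1) = m + 1 + i by omega,
      derivWithin_congr (ih (m + 1)) (ih (m + 1) hx)]
    exact ((hasDerivWithinAt_leftFracIntegral_powKernel_succ hg m (hsa hx)).mono hsa).derivWithin
      (hs x hx)

end

theorem first_fundamental_left_riemannLiouville_general
    (a b : ℝ) (hab : a < b) (n : ℕ) (hn : 1 ≤ n)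
    (k κ : ℝ → ℝ)
    (hkI : IntegrableOn k (Ioc 0 (b - a)))
    (hκI : IntegrableOn κ (Ioc 0 (b - a)))
    (hSonine : ∀ y, 0 < y → y ≤ b - a →
      ∫ s in (0:ℝ)..y, k (y - s) * κ s = y ^ (n - 1) / (n - 1).factorial)
    (f : ℝ → ℝ) (hf : ContinuousOn f (Icc a b)) :
    ∀ x ∈ Ioc a b,
      (∀ j < n, DifferentiableWithinAt ℝ
          (iteratedDerivWithin j
            (fun t => ∫ s in a..t, k (t - s) * (∫ u in a..s, κ (s - u) * f u))
            (Icc a b))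
          (Icc a b) x) ∧
      iteratedDerivWithin n
          (fun t => ∫ s in a..t, k (t - s) * (∫ u in a..s, κ (s - u) * f u))
          (Icc a b) x = f x := by
  show ∀ x ∈ Ioc a b,
    (∀ j < n, DifferentiableWithinAt ℝ
      (iteratedDerivWithin j (leftFracIntegral k a (leftFracIntegral κ a f)) (Icc a b))
      (Icc a b) x) ∧
    iteratedDerivWithin n (leftFracIntegral k a (leftFracIntegral κ a f)) (Icc a b) x = f x
  intro x hx
  obtain ⟨g, hg, hfg⟩ : ∃ g, Continuous g ∧ EqOn f g (Icc a b) :=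
    ⟨IccExtend hab.le ((Icc a b).domRestrict f), hf.domRestrict.Icc_extend',
      fun y hy => (IccExtend_of_mem hab.le ((Icc a b).domRestrict f) hy).symm⟩
  have hxI : x ∈ Icc a b := Ioc_subset_Icc_self hx
  have hsa : Icc a b ⊆ Ici a := Icc_subset_Ici_self
  have hF : EqOn (leftFracIntegral k a (leftFracIntegral κ a f))
      (leftFracIntegral (powKernel (n - 1)) a g) (Icc a b) := fun t ht => by
    have hIt : Ioc 0 (t - a) ⊆ Ioc 0 (b - a) := Ioc_subset_Ioc_right (by linarith [ht.2])
    calc leftFracIntegral k a (leftFracIntegral κ a f) t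
        = leftFracIntegral k a (leftFracIntegral κ a g) t :=
          leftFracIntegral_congr ht.1 fun s hs =>
            leftFracIntegral_congr hs.1 (hfg.mono (Icc_subset_Icc_right (hs.2.trans ht.2)))
      _ = leftFracIntegral (laplaceConv k κ) a g t :=
          leftFracIntegral_leftFracIntegral (hkI.mono_set hIt) (hκI.mono_set hIt) hg ht.1
      _ = leftFracIntegral (powKernel (n - 1)) a g t :=
          leftFracIntegral_congr_kernel ht.1 fun y hy =>
            hSonine y hy.1 (by linarith [hy.2, ht.2])
  have hD : ∀ j ≤ n - 1, EqOn
      (iteratedDerivWithin j (leftFracIntegral k a (leftFracIntegral κ a f)) (Icc a b))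
      (leftFracIntegral (powKernel (n - 1 - j)) a g) (Icc a b) := fun j hj =>
    (iteratedDerivWithin_congr hF).trans <| by
      simpa only [Nat.sub_add_cancel hj] using iteratedDerivWithin_leftFracIntegral_powKernel
        (uniqueDiffOn_Icc hab) hsa hg (n - 1 - j) j
  refine ⟨fun j hj => ?_, ?_⟩
  · exact ((differentiableWithinAt_leftFracIntegral_powKernel hg _ hxI.1).mono hsa).congr
      (hD j (by omega)) (hD j (by omega) hxI)
  · rw [← Nat.sub_add_cancel hn, iteratedDerivWithin_succ,
      derivWithin_congr (hD (n - 1) le_rfl) (hD _ le_rfl hxI), Nat.sub_self,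
      (hasDerivAt_leftFracIntegral_powKernel_zero hg x).hasDerivWithinAt.derivWithin
        (uniqueDiffOn_Icc hab x hxI), hfg hxI]

/-- **First fundamental theorem of general fractional calculus, left Riemann–Liouville
case.** If `(k, κ)` satisfy the modified Sonine condition of order `n` on `(0, b-a]`,
then for every continuous `f : [a,b] → ℝ` and every `x ∈ (a, b]` the left-sided general
fractional Riemann–Liouville derivative of the left-sided general fractional integral
of `f` exists at `x` and equals `f x`. -/
theorem first_fundamental_left_riemannLiouville
    (a b : ℝ) (hab : a < b) (n : ℕ) (hn : 1 ≤ n)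
    (k κ : ℝ → ℝ) (hkm : Measurable k) (hκm : Measurable κ)
    (hkI : IntegrableOn k (Ioc 0 (b - a)))
    (hκI : IntegrableOn κ (Ioc 0 (b - a)))
    (hSonine : ∀ y, 0 < y → y ≤ b - a →
      ∫ s in (0:ℝ)..y, k (y - s) * κ s = y ^ (n - 1) / (n - 1).factorial)
    (f : ℝ → ℝ) (hf : ContinuousOn f (Icc a b)) :
    ∀ x ∈ Ioc a b,
      (∀ j < n, DifferentiableWithinAt ℝ
          (iteratedDerivWithin j
            (fun t => ∫ s in a..t, k (t - s) * (∫ u in a..s, κ (s - u) * f u))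
            (Icc a b))
          (Icc a b) x) ∧
      iteratedDerivWithin n
          (fun t => ∫ s in a..t, k (t - s) * (∫ u in a..s, κ (s - u) * f u))
          (Icc a b) x = f x :=
  first_fundamental_left_riemannLiouville_general a b hab n hn k κ hkI hκI hSonine f hf
end

section
/- (Second fundamental theorem, left Riemann–Liouville case.) Let a < b be real numbers and n ≥ 1 a natural number. Let k, κ : ℝ → ℝ be measurable, integrable on (0, b−a], and satisfy the modified Sonine condition of order n. Suppose f : [a,b] → ℝ can be written as f = I_κ φ for some continuous function φ : [a,b] → ℝ. Then for every x ∈ (a,b], I_κ ( ᴿᴸD_k f )(x) = f(x). -/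
/-!
Extending `k`, `κ` by zero outside `(0, b - a]` and `φ` outside `[a, b]`, Fubini's theorem gives
`I_k ∘ I_κ = I_{k ⋆ κ}` on `[a, b]`, and the Sonine condition identifies `k ⋆ κ` with
`y ^ (n - 1) / (n - 1)!`. Hence `I_k f = I_k (I_κ φ)` is the `n`-fold primitive of `φ` vanishing
at `a`, its `n`-th derivative is `φ`, and applying `I_κ` returns `I_κ φ = f`.
-/

open MeasureTheory intervalIntegral Set

/-- The general fractional integral `I_K` with lower terminal `a`. -/
noncomputable def fracIntegral (a : ℝ) (K ψ : ℝ → ℝ) (t : ℝ) : ℝ :=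
  ∫ s in a..t, K (t - s) * ψ s

/-- The kernel of `(m + 1)`-fold integration: by Cauchy's formula `I_{rlKernel m}` is the
`(m + 1)`-fold primitive vanishing at the lower terminal. -/
noncomputable def rlKernel (m : ℕ) (y : ℝ) : ℝ :=
  y ^ m / m.factorial

theorem fracIntegral_congr {a t : ℝ} {K ψ ψ' : ℝ → ℝ} (hat : a ≤ t)
    (h : EqOn ψ ψ' (Ioc a t)) :
    fracIntegral a K ψ t = fracIntegral a K ψ' t :=
  intervalIntegral.integral_congr_ae <| ae_of_all _ fun s hs => by
    rw [uIoc_of_le hat] at hs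
    rw [h hs]

section Truncation

variable {a c t : ℝ} {K ψ : ℝ → ℝ}

theorem integral_indicator_comp_sub_mul_eq_zero (hψ : ∀ s < a, ψ s = 0) (ht : t ≤ a) :
    ∫ s, (Ioc 0 c).indicator K (t - s) * ψ s = 0 := by
  refine integral_eq_zero_of_ae (ae_of_all _ fun s => ?_)
  rcases lt_or_ge s a with hs | hs
  · simp [hψ s hs]
  · simp [indicator_of_notMem (notMem_Ioc_of_le (by linarith : t - s ≤ 0))]

theorem fracIntegral_eq_integral_indicator (hψ : ∀ s < a, ψ s = 0) (hat : a ≤ t)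
    (htc : t ≤ a + c) :
    fracIntegral a K ψ t = ∫ s, (Ioc 0 c).indicator K (t - s) * ψ s := by
  have hvanish : ∀ s ∉ Ico a t, (Ioc 0 c).indicator K (t - s) * ψ s = 0 := by
    intro s hs
    rcases lt_or_ge s a with h | h
    · rw [hψ s h, mul_zero]
    · have hts : t ≤ s := not_lt.1 fun h' => hs ⟨h, h'⟩
      rw [indicator_of_notMem (notMem_Ioc_of_le (by linarith)), zero_mul]
  rw [← setIntegral_eq_integral_of_forall_compl_eq_zero hvanish, integral_Ico_eq_integral_Ioo,
    fracIntegral, integral_of_le hat, integral_Ioc_eq_integral_Ioo]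
  refine setIntegral_congr_fun measurableSet_Ioo fun s hs => ?_
  rw [indicator_of_mem (show t - s ∈ Ioc 0 c from ⟨by linarith [hs.2], by linarith [hs.1]⟩)]

end Truncation

theorem integral_mul_integral_comp_sub {k κ ψ : ℝ → ℝ} (hk : Integrable k)
    (hκ : Integrable κ) (hψ : AEStronglyMeasurable ψ) {C : ℝ} (hC : ∀ s, ‖ψ s‖ ≤ C)
    (t : ℝ) :
    ∫ u, k (t - u) * ∫ s, κ (u - s) * ψ s = ∫ s, (∫ v, k (t - s - v) * κ v) * ψ s := by
  have hkκ : Integrable (fun p : ℝ × ℝ => k (t - p.1) * κ (p.1 - p.2))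
      (volume.prod volume) := by
    simpa [neg_sub, Function.comp_def] using
      ((hk.comp_sub_left t).convolution_integrand
        (ContinuousLinearMap.mul ℝ ℝ) hκ.comp_neg).swap
  have hF : Integrable (fun p : ℝ × ℝ => k (t - p.1) * (κ (p.1 - p.2) * ψ p.2))
      (volume.prod volume) := by
    simp_rw [← mul_assoc]
    exact hkκ.mul_bdd hψ.comp_snd (ae_of_all _ fun p => hC p.2)
  calc ∫ u, k (t - u) * ∫ s, κ (u - s) * ψ s
      = ∫ u, ∫ s, k (t - u) * (κ (u - s) * ψ s) := by
        simp_rw [MeasureTheory.integral_const_mul]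
    _ = ∫ s, ∫ u, k (t - u) * (κ (u - s) * ψ s) := integral_integral_swap hF
    _ = ∫ s, (∫ u, k (t - u) * κ (u - s)) * ψ s := by
        simp_rw [← mul_assoc, MeasureTheory.integral_mul_const]
    _ = ∫ s, (∫ v, k (t - s - v) * κ v) * ψ s := by
        congr! 2 with s
        rw [← integral_add_right_eq_self (fun u => k (t - u) * κ (u - s)) s]
        simp only [add_sub_cancel_right, sub_add_eq_sub_sub_swap]

theorem integral_indicator_conv_eq_indicator {T y : ℝ} {k κ c : ℝ → ℝ}
    (hc : ∀ y ∈ Ioc 0 T, fracIntegral 0 k κ y = c y) (hy : y ≤ T) :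
    ∫ v, (Ioc 0 T).indicator k (y - v) * (Ioc 0 T).indicator κ v =
      (Ioc 0 T).indicator c y := by
  have hκ : ∀ v < 0, (Ioc 0 T).indicator κ v = 0 :=
    fun v hv => indicator_of_notMem (notMem_Ioc_of_le hv.le) _
  rcases le_or_gt y 0 with hy0 | hy0
  · rw [integral_indicator_comp_sub_mul_eq_zero hκ hy0,
      indicator_of_notMem (notMem_Ioc_of_le hy0)]
  · rw [indicator_of_mem (show y ∈ Ioc 0 T from ⟨hy0, hy⟩), ← hc y ⟨hy0, hy⟩,
      ← fracIntegral_eq_integral_indicator hκ hy0.le (by linarith)]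
    exact fracIntegral_congr hy0.le fun v hv =>
      indicator_of_mem (show v ∈ Ioc 0 T from ⟨hv.1, hv.2.trans hy⟩) κ

theorem fracIntegral_fracIntegral_of_bdd {a T t : ℝ} {k κ c ψ : ℝ → ℝ}
    (hk : IntegrableOn k (Ioc 0 T)) (hκ : IntegrableOn κ (Ioc 0 T))
    (hc : ∀ y ∈ Ioc 0 T, fracIntegral 0 k κ y = c y) (hψm : AEStronglyMeasurable ψ) {C : ℝ}
    (hψC : ∀ s, ‖ψ s‖ ≤ C) (hψ : ∀ s < a, ψ s = 0) (hat : a ≤ t)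
    (htT : t ≤ a + T) :
    fracIntegral a k (fracIntegral a κ ψ) t = fracIntegral a c ψ t := by
  set G := fun u => ∫ s, (Ioc 0 T).indicator κ (u - s) * ψ s
  have hG : EqOn (fracIntegral a κ ψ) G (Ioc a t) := fun u hu =>
    fracIntegral_eq_integral_indicator hψ hu.1.le (by linarith [hu.2])
  calc fracIntegral a k (fracIntegral a κ ψ) t
      = ∫ u, (Ioc 0 T).indicator k (t - u) * G u := by
        rw [fracIntegral_congr hat hG, fracIntegral_eq_integral_indicator
          (fun u hu => integral_indicator_comp_sub_mul_eq_zero hψ hu.le) hat htT]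
    _ = ∫ s, (∫ v, (Ioc 0 T).indicator k (t - s - v) * (Ioc 0 T).indicator κ v) * ψ s :=
        integral_mul_integral_comp_sub ((integrable_indicator_iff measurableSet_Ioc).2 hk)
          ((integrable_indicator_iff measurableSet_Ioc).2 hκ) hψm hψC t
    _ = ∫ s, (Ioc 0 T).indicator c (t - s) * ψ s := by
        refine MeasureTheory.integral_congr_ae (ae_of_all _ fun s => ?_)
        rcases lt_or_ge s a with hs | hs
        · simp only [hψ s hs, mul_zero]
        · dsimp only
          rw [integral_indicator_conv_eq_indicator (y := t - s) hc (by linarith)]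
    _ = fracIntegral a c ψ t := (fracIntegral_eq_integral_indicator hψ hat htT).symm

theorem fracIntegral_fracIntegral {a b t : ℝ} {k κ c ψ : ℝ → ℝ}
    (hk : IntegrableOn k (Ioc 0 (b - a))) (hκ : IntegrableOn κ (Ioc 0 (b - a)))
    (hc : ∀ y ∈ Ioc 0 (b - a), fracIntegral 0 k κ y = c y)
    (hψ : ContinuousOn ψ (Icc a b)) (ht : t ∈ Icc a b) :
    fracIntegral a k (fracIntegral a κ ψ) t = fracIntegral a c ψ t := by
  set ψ0 := (Icc a b).indicator ψ
  have hψψ0 : ∀ {u}, u ≤ b → EqOn ψ ψ0 (Ioc a u) := fun hu s hs =>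
    (indicator_of_mem (show s ∈ Icc a b from ⟨hs.1.le, hs.2.trans hu⟩) ψ).symm
  obtain ⟨C, hC⟩ := isCompact_Icc.exists_bound_of_continuousOn hψ
  have hψ0C : ∀ s, ‖ψ0 s‖ ≤ C := by
    intro s
    by_cases hs : s ∈ Icc a b
    · simpa [ψ0, hs] using hC s hs
    · simpa [ψ0, hs] using (norm_nonneg _).trans (hC t ht)
  have hψ0m : AEStronglyMeasurable ψ0 := (aestronglyMeasurable_indicator_iff measurableSet_Icc).2
    (hψ.aestronglyMeasurable measurableSet_Icc)
  have hψ0 : ∀ s < a, ψ0 s = 0 := fun s hs => indicator_of_notMem (notMem_Icc_of_lt hs) _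
  calc fracIntegral a k (fracIntegral a κ ψ) t
      = fracIntegral a k (fracIntegral a κ ψ0) t :=
        fracIntegral_congr ht.1 fun u hu => fracIntegral_congr hu.1.le (hψψ0 (hu.2.trans ht.2))
    _ = fracIntegral a c ψ0 t :=
        fracIntegral_fracIntegral_of_bdd hk hκ hc hψ0m hψ0C hψ0 ht.1 (by linarith [ht.2])
    _ = fracIntegral a c ψ t := (fracIntegral_congr ht.1 (hψψ0 ht.2)).symm

theorem iteratedDerivWithin_succ_eqOn_of_hasDerivWithinAt {𝕜 F : Type*}
    [NontriviallyNormedField 𝕜] [NormedAddCommGroup F] [NormedSpace 𝕜 F] {s : Set 𝕜}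
    (hs : UniqueDiffOn 𝕜 s) {Q : ℕ → 𝕜 → F} {g : 𝕜 → F}
    (hzero : ∀ t ∈ s, HasDerivWithinAt (Q 0) (g t) s t)
    (hsucc : ∀ m, ∀ t ∈ s, HasDerivWithinAt (Q (m + 1)) (Q m t) s t) (m : ℕ) :
    EqOn (iteratedDerivWithin (m + 1) (Q m) s) g s := by
  induction m with
  | zero =>
    intro t ht
    rw [zero_add, iteratedDerivWithin_one, (hzero t ht).derivWithin (hs t ht)]
  | succ m ih =>
    rw [iteratedDerivWithin_succ']
    exact (iteratedDerivWithin_congr fun t ht => (hsucc m t ht).derivWithin (hs t ht)).trans ih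

theorem hasDerivWithinAt_integral_Icc {a b t : ℝ} {g : ℝ → ℝ}
    (hg : ContinuousOn g (Icc a b)) (ht : t ∈ Icc a b) :
    HasDerivWithinAt (fun x => ∫ u in a..x, g u) (g t) (Icc a b) t :=
  have : Fact (t ∈ Icc a b) := ⟨ht⟩
  integral_hasDerivWithinAt_right
    ((hg.mono (Icc_subset_Icc_right ht.2)).intervalIntegrable_of_Icc ht.1)
    (hg.stronglyMeasurableAtFilter_nhdsWithin measurableSet_Icc t) (hg t ht)

theorem integral_rlKernel (m : ℕ) (y : ℝ) :
    ∫ v in (0:ℝ)..y, rlKernel m v = rlKernel (m + 1) y := by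
  simp only [rlKernel, intervalIntegral.integral_div, integral_pow, Nat.factorial_succ]
  push_cast
  field_simp
  ring

section RepeatedIntegral

variable {a b : ℝ} {ψ : ℝ → ℝ}

theorem integral_fracIntegral_rlKernel (hψ : ContinuousOn ψ (Icc a b)) (m : ℕ) {t : ℝ}
    (ht : t ∈ Icc a b) :
    ∫ u in a..t, fracIntegral a (rlKernel m) ψ u = fracIntegral a (rlKernel (m + 1)) ψ t := by
  have := fracIntegral_fracIntegral (k := fun _ => 1) (κ := rlKernel m) (c := rlKernel (m + 1))
    continuous_const.integrableOn_Ioc (continuous_pow m |>.div_const _).integrableOn_Ioc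
    (fun y _ => by simpa only [fracIntegral, one_mul] using integral_rlKernel m y) hψ ht
  simpa [fracIntegral] using this

theorem hasDerivWithinAt_fracIntegral_rlKernel_zero (hψ : ContinuousOn ψ (Icc a b))
    {t : ℝ} (ht : t ∈ Icc a b) :
    HasDerivWithinAt (fracIntegral a (rlKernel 0) ψ) (ψ t) (Icc a b) t := by
  have hR : fracIntegral a (rlKernel 0) ψ = fun x => ∫ u in a..x, ψ u := by
    funext x
    simp [fracIntegral, rlKernel]
  exact hR ▸ hasDerivWithinAt_integral_Icc hψ ht

theorem hasDerivWithinAt_fracIntegral_rlKernel_succ_of_continuousOn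
    (hψ : ContinuousOn ψ (Icc a b)) {m : ℕ}
    (hm : ContinuousOn (fracIntegral a (rlKernel m) ψ) (Icc a b)) {t : ℝ} (ht : t ∈ Icc a b) :
    HasDerivWithinAt (fracIntegral a (rlKernel (m + 1)) ψ)
      (fracIntegral a (rlKernel m) ψ t) (Icc a b) t :=
  (hasDerivWithinAt_integral_Icc hm ht).congr
    (fun _ hu => (integral_fracIntegral_rlKernel hψ m hu).symm)
    (integral_fracIntegral_rlKernel hψ m ht).symm

theorem continuousOn_fracIntegral_rlKernel (hψ : ContinuousOn ψ (Icc a b)) (m : ℕ) :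
    ContinuousOn (fracIntegral a (rlKernel m) ψ) (Icc a b) := by
  induction m with
  | zero => exact fun t ht =>
      (hasDerivWithinAt_fracIntegral_rlKernel_zero hψ ht).continuousWithinAt
  | succ m ih => exact fun t ht =>
      (hasDerivWithinAt_fracIntegral_rlKernel_succ_of_continuousOn hψ ih ht).continuousWithinAt

theorem iteratedDerivWithin_fracIntegral_rlKernel (hab : a < b) (hψ : ContinuousOn ψ (Icc a b))
    (m : ℕ) : EqOn (iteratedDerivWithin (m + 1) (fracIntegral a (rlKernel m) ψ) (Icc a b)) ψ
      (Icc a b) :=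
  iteratedDerivWithin_succ_eqOn_of_hasDerivWithinAt
    (Q := fun m => fracIntegral a (rlKernel m) ψ) (uniqueDiffOn_Icc hab)
    (fun _ => hasDerivWithinAt_fracIntegral_rlKernel_zero hψ)
    (fun m _ => hasDerivWithinAt_fracIntegral_rlKernel_succ_of_continuousOn hψ
      (continuousOn_fracIntegral_rlKernel hψ m)) m

end RepeatedIntegral

theorem second_fundamental_left_riemannLiouville_general
    (a b : ℝ) (hab : a < b) (n : ℕ) (hn : 1 ≤ n)
    (k κ : ℝ → ℝ)
    (hkI : IntegrableOn k (Ioc 0 (b - a)))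
    (hκI : IntegrableOn κ (Ioc 0 (b - a)))
    (hSonine : ∀ y, 0 < y → y ≤ b - a →
      ∫ s in (0:ℝ)..y, k (y - s) * κ s = y ^ (n - 1) / (n - 1).factorial)
    (f φ : ℝ → ℝ) (hφ : ContinuousOn φ (Icc a b))
    (hfφ : ∀ x ∈ Icc a b, f x = ∫ s in a..x, κ (x - s) * φ s) :
    ∀ x ∈ Ioc a b,
      (∫ s in a..x, κ (x - s) *
          iteratedDerivWithin n (fun t => ∫ u in a..t, k (t - u) * f u) (Icc a b) s) =
        f x := by
  obtain ⟨N, rfl⟩ : ∃ N, n = N + 1 := ⟨n - 1, by omega⟩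
  show ∀ x ∈ Ioc a b,
    fracIntegral a κ (iteratedDerivWithin (N + 1) (fracIntegral a k f) (Icc a b)) x = f x
  have hIkf : EqOn (fracIntegral a k f) (fracIntegral a (rlKernel N) φ) (Icc a b) := fun t ht =>
    calc fracIntegral a k f t = fracIntegral a k (fracIntegral a κ φ) t :=
          fracIntegral_congr ht.1 fun u hu => hfφ u ⟨hu.1.le, hu.2.trans ht.2⟩
      _ = fracIntegral a (rlKernel N) φ t :=
          fracIntegral_fracIntegral hkI hκI (fun y hy => hSonine y hy.1 hy.2) hφ ht
  have hDkf : EqOn (iteratedDerivWithin (N + 1) (fracIntegral a k f) (Icc a b)) φ (Icc a b) :=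
    (iteratedDerivWithin_congr hIkf).trans (iteratedDerivWithin_fracIntegral_rlKernel hab hφ N)
  intro x hx
  exact (fracIntegral_congr hx.1.le fun s hs => hDkf ⟨hs.1.le, hs.2.trans hx.2⟩).trans
    (hfφ x ⟨hx.1.le, hx.2⟩).symm

/-- **Second fundamental theorem of general fractional calculus, left Riemann–Liouville
case.** If `(k, κ)` satisfy the modified Sonine condition of order `n` on `(0, b-a]` and
`f = I_κ φ` for some continuous `φ : [a,b] → ℝ`, then for every `x ∈ (a, b]` one has
`I_κ (ᴿᴸD_k f)(x) = f(x)`, where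
`ᴿᴸD_k f (t) = (d/dt)ⁿ ∫_a^t k(t-s) f(s) ds`. -/
theorem second_fundamental_left_riemannLiouville
    (a b : ℝ) (hab : a < b) (n : ℕ) (hn : 1 ≤ n)
    (k κ : ℝ → ℝ) (hkm : Measurable k) (hκm : Measurable κ)
    (hkI : IntegrableOn k (Ioc 0 (b - a)))
    (hκI : IntegrableOn κ (Ioc 0 (b - a)))
    (hSonine : ∀ y, 0 < y → y ≤ b - a →
      ∫ s in (0:ℝ)..y, k (y - s) * κ s = y ^ (n - 1) / (n - 1).factorial)
    (f φ : ℝ → ℝ) (hφ : ContinuousOn φ (Icc a b))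
    (hfφ : ∀ x ∈ Icc a b, f x = ∫ s in a..x, κ (x - s) * φ s) :
    ∀ x ∈ Ioc a b,
      (∫ s in a..x, κ (x - s) *
          iteratedDerivWithin n (fun t => ∫ u in a..t, k (t - u) * f u) (Icc a b) s) =
        f x :=
  second_fundamental_left_riemannLiouville_general a b hab n hn k κ hkI hκI hSonine f φ hφ hfφ
end

section
/- (Second fundamental theorem, left Caputo case.) Let a < b be real numbers and n ≥ 1 a natural number. Let k, κ : ℝ → ℝ be measurable, integrable on (0, b−a], and satisfy the modified Sonine condition of order n. Then for every n-times continuously differentiable function f : [a,b] → ℝ and every x ∈ (a,b], I_κ ( ᶜD_k f )(x) = f(x) − Σ_{j=0}^{n−1} f⁽ʲ⁾(a) (x−a)ʲ/j!. -/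
/-!
Extending `g = f⁽ⁿ⁾` by zero outside `[a, b]` and `k`, `κ` by zero outside `[0, b - a]` turns
both Volterra integrals into convolutions on `ℝ`, so `I_κ (ᶜD_k f) = (g ⋆ k) ⋆ κ`. Since `g` is
bounded and `k`, `κ` are integrable, convolution is associative here, giving `g ⋆ (κ ⋆ k)`. The
Sonine condition says `(κ ⋆ k)(y) = y ^ (n - 1) / (n - 1)!` for `0 < y ≤ b - a`, and
`∫ₐˣ g(u) (x - u) ^ (n - 1) / (n - 1)! du` is the integral remainder in Taylor's formula at `a`.
-/

open MeasureTheory intervalIntegral Set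
open scoped Convolution

theorem convolution_lsmul_comm (f g : ℝ → ℝ) : f ⋆ g = g ⋆ f := by
  have hflip : (ContinuousLinearMap.lsmul ℝ ℝ : ℝ →L[ℝ] ℝ →L[ℝ] ℝ).flip =
      ContinuousLinearMap.lsmul ℝ ℝ := by
    ext
    simp
  rw [← convolution_flip, hflip]

theorem convolution_lsmul_assoc_of_bounded {f g h : ℝ → ℝ} {C : ℝ} (hf : Integrable f)
    (hfC : ∀ t, ‖f t‖ ≤ C) (hg : Integrable g) (hh : Integrable h) (x : ℝ) :
    ((f ⋆ g) ⋆ h) x = (f ⋆ (g ⋆ h)) x := by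
  refine convolution_assoc _ _ _ _ (fun _ _ _ => by simp [mul_assoc]) hf.aestronglyMeasurable
    hg.aestronglyMeasurable hh.aestronglyMeasurable (hf.ae_convolution_exists _ hg)
    (hg.norm.ae_convolution_exists _ hh.norm) ?_
  have hgh : Integrable ((fun t => ‖g t‖) ⋆[ContinuousLinearMap.mul ℝ ℝ] fun t => ‖h t‖) :=
    hg.norm.integrable_convolution _ hh.norm
  exact (hgh.comp_sub_left x).bdd_mul hf.norm.aestronglyMeasurable
    (Filter.Eventually.of_forall fun t => by simpa using hfC t)

section Causal

variable {F H : ℝ → ℝ} {a x : ℝ}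

theorem convolution_eq_zero_of_lt (hF : ∀ t < a, F t = 0) (hH : ∀ t < 0, H t = 0)
    (hx : x < a) : (F ⋆ H) x = 0 := by
  rw [convolution_lsmul]
  refine integral_eq_zero_of_ae (Filter.Eventually.of_forall fun t => ?_)
  rcases lt_or_ge t a with ht | ht
  · simp [hF t ht]
  · simp [hH (x - t) (by linarith)]

theorem convolution_eq_intervalIntegral (hF : ∀ t < a, F t = 0) (hH : ∀ t < 0, H t = 0)
    (hax : a ≤ x) : (F ⋆ H) x = ∫ t in a..x, F t * H (x - t) := by
  rw [convolution_lsmul, integral_of_le hax, ← integral_Icc_eq_integral_Ioc,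
    setIntegral_eq_integral_of_forall_compl_eq_zero]
  · rfl
  intro t ht
  rcases lt_or_ge t a with hta | hta
  · simp [hF t hta]
  · have hxt : x < t := lt_of_not_ge fun h => ht ⟨hta, h⟩
    simp [hH (x - t) (by linarith)]

end Causal

section Indicator

variable {φ ψ g k κ w : ℝ → ℝ} {a b L x : ℝ}

theorem indicator_Icc_eq_zero_of_lt {t : ℝ} (ht : t < a) : (Icc a b).indicator φ t = 0 :=
  indicator_of_notMem (notMem_Icc_of_lt ht) _

theorem integrable_indicator_Icc_of_integrableOn_Ioc (hφ : IntegrableOn φ (Ioc a b)) :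
    Integrable ((Icc a b).indicator φ) :=
  ((integrableOn_Icc_iff_integrableOn_Ioc).2 hφ).integrable_indicator measurableSet_Icc

theorem ContinuousOn.integrable_indicator_Icc (hφ : ContinuousOn φ (Icc a b)) :
    Integrable ((Icc a b).indicator φ) :=
  hφ.integrableOn_Icc.integrable_indicator measurableSet_Icc

theorem ContinuousOn.exists_bound_indicator_Icc (hφ : ContinuousOn φ (Icc a b)) :
    ∃ C, ∀ t, ‖(Icc a b).indicator φ t‖ ≤ C := by
  obtain ⟨C, hC⟩ := isCompact_Icc.exists_bound_of_continuousOn hφ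
  refine ⟨max C 0, fun t => ?_⟩
  by_cases ht : t ∈ Icc a b
  · rw [indicator_of_mem ht]
    exact (hC t ht).trans (le_max_left _ _)
  · rw [indicator_of_notMem ht, norm_zero]
    exact le_max_right _ _

theorem convolution_indicator_Icc (hx : x ∈ Icc a b) (hxL : x - a ≤ L) :
    ((Icc a b).indicator φ ⋆ (Icc 0 L).indicator ψ) x = ∫ t in a..x, φ t * ψ (x - t) := by
  rw [convolution_eq_intervalIntegral (fun _ => indicator_Icc_eq_zero_of_lt)
    (fun _ => indicator_Icc_eq_zero_of_lt) hx.1]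
  refine integral_congr fun t ht => ?_
  rw [uIcc_of_le hx.1] at ht
  have hφ : t ∈ Icc a b := ⟨ht.1, ht.2.trans hx.2⟩
  have hψ : x - t ∈ Icc 0 L := ⟨by linarith [ht.2], by linarith [ht.1]⟩
  rw [indicator_of_mem hφ, indicator_of_mem hψ]

theorem integral_mul_integral_eq_convolution (hx : x ∈ Icc a b) (hxL : x - a ≤ L) :
    ∫ s in a..x, κ (x - s) * ∫ u in a..s, k (s - u) * g u =
      (((Icc a b).indicator g ⋆ (Icc 0 L).indicator k) ⋆ (Icc 0 L).indicator κ) x := by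
  have hcausal : ∀ t < a, ((Icc a b).indicator g ⋆ (Icc 0 L).indicator k) t = 0 :=
    fun t ht => convolution_eq_zero_of_lt (fun _ => indicator_Icc_eq_zero_of_lt)
      (fun _ => indicator_Icc_eq_zero_of_lt) ht
  rw [convolution_eq_intervalIntegral hcausal
    (fun _ => indicator_Icc_eq_zero_of_lt) hx.1]
  refine integral_congr fun s hs => ?_
  rw [uIcc_of_le hx.1] at hs
  have hxs : x - s ∈ Icc 0 L := ⟨by linarith [hs.2], by linarith [hs.1]⟩
  rw [convolution_indicator_Icc ⟨hs.1, hs.2.trans hx.2⟩ (by linarith [hs.2]),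
    indicator_of_mem hxs, mul_comm]
  exact congrArg (· * _) (integral_congr fun u _ => mul_comm _ _)

theorem convolution_indicator_Icc_convolution
    (hw : ∀ y ∈ Ioc 0 L, ∫ s in (0 : ℝ)..y, k (y - s) * κ s = w y)
    (hx : x ∈ Icc a b) (hxL : x - a ≤ L) :
    ((Icc a b).indicator g ⋆ ((Icc 0 L).indicator κ ⋆ (Icc 0 L).indicator k)) x =
      ∫ u in a..x, w (x - u) * g u := by
  have hcausal : ∀ t < 0, ((Icc 0 L).indicator κ ⋆ (Icc 0 L).indicator k) t = 0 :=
    fun t ht => convolution_eq_zero_of_lt (fun _ => indicator_Icc_eq_zero_of_lt)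
      (fun _ => indicator_Icc_eq_zero_of_lt) ht
  rw [convolution_eq_intervalIntegral
    (fun _ => indicator_Icc_eq_zero_of_lt) hcausal hx.1]
  -- at `u = x` the kernel is evaluated at `0`, where `hw` says nothing
  refine integral_congr_ae ?_
  filter_upwards [volume.ae_ne x] with u hux hu
  rw [uIoc_of_le hx.1] at hu
  have hy : x - u ∈ Ioc 0 L := ⟨sub_pos.2 (lt_of_le_of_ne hu.2 hux), by linarith [hu.1]⟩
  have hu' : u ∈ Icc a b := ⟨hu.1.le, hu.2.trans hx.2⟩
  rw [indicator_of_mem hu',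
    convolution_indicator_Icc (Ioc_subset_Icc_self hy) (by linarith [hy.2]), ← hw _ hy, mul_comm]
  exact congrArg (· * _) (integral_congr fun s _ => mul_comm _ _)

end Indicator

section Taylor

variable {F : Type*} [NormedAddCommGroup F] [NormedSpace ℝ F]

theorem iteratedDerivWithin_Icc_eq_of_mem_Ico {f : ℝ → F} {a b x t : ℝ} (hxb : x ≤ b)
    (ht : t ∈ Ico a x) (j : ℕ) :
    iteratedDerivWithin j f (Icc a x) t = iteratedDerivWithin j f (Icc a b) t := by
  simp only [iteratedDerivWithin_eq_iteratedFDerivWithin]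
  congr 1
  refine iteratedFDerivWithin_congr_set ?_ j
  filter_upwards [Iio_mem_nhds ht.2] with u hu
  simp only [eq_iff_iff]
  exact ⟨fun h => ⟨h.1, h.2.trans hxb⟩, fun h => ⟨h.1, le_of_lt hu⟩⟩

theorem taylor_integral_remainder_Icc [CompleteSpace F] {f : ℝ → F} {a b x : ℝ} {n : ℕ}
    (hf : ContDiffOn ℝ (n + 1 : ℕ) f (Icc a b)) (hx : x ∈ Ioc a b) :
    f x - taylorWithinEval f n (Icc a b) a x =
      ∫ t in a..x, ((x - t) ^ n / n.factorial) • iteratedDerivWithin (n + 1) f (Icc a b) t := by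
  have hIcc : uIcc a x = Icc a x := uIcc_of_le hx.1.le
  have key := taylor_integral_remainder (hf.mono (hIcc.subset.trans (Icc_subset_Icc_right hx.2)))
  rw [hIcc] at key
  have htaylor : taylorWithinEval f n (Icc a x) a x = taylorWithinEval f n (Icc a b) a x := by
    simp only [taylor_within_apply,
      iteratedDerivWithin_Icc_eq_of_mem_Ico hx.2 (left_mem_Ico.2 hx.1)]
  rw [← htaylor, key]
  refine integral_congr_ae ?_
  filter_upwards [volume.ae_ne x] with t htx ht
  rw [uIoc_of_le hx.1.le] at ht
  rw [iteratedDerivWithin_Icc_eq_of_mem_Ico hx.2 ⟨ht.1.le, lt_of_le_of_ne ht.2 htx⟩]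

end Taylor

theorem second_fundamental_left_caputo_general
    (a b : ℝ) (n : ℕ) (hn : 1 ≤ n)
    (k κ : ℝ → ℝ)
    (hkI : IntegrableOn k (Ioc 0 (b - a)))
    (hκI : IntegrableOn κ (Ioc 0 (b - a)))
    (hSonine : ∀ y, 0 < y → y ≤ b - a →
      ∫ s in (0:ℝ)..y, k (y - s) * κ s = y ^ (n - 1) / (n - 1).factorial)
    (f : ℝ → ℝ) (hf : ContDiffOn ℝ n f (Icc a b)) :
    ∀ x ∈ Ioc a b,
      (∫ s in a..x, κ (x - s) *
          (∫ u in a..s, k (s - u) * iteratedDerivWithin n f (Icc a b) u)) =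
        f x - ∑ j ∈ Finset.range n,
          iteratedDerivWithin j f (Icc a b) a * (x - a) ^ j / j.factorial := by
  intro x hx
  obtain ⟨N, rfl⟩ : ∃ N, n = N + 1 := ⟨n - 1, by omega⟩
  have hxI : x ∈ Icc a b := Ioc_subset_Icc_self hx
  have hxL : x - a ≤ b - a := by linarith [hx.2]
  have hg : ContinuousOn (iteratedDerivWithin (N + 1) f (Icc a b)) (Icc a b) :=
    hf.continuousOn_iteratedDerivWithin le_rfl (uniqueDiffOn_Icc (hx.1.trans_le hx.2))
  obtain ⟨C, hC⟩ := hg.exists_bound_indicator_Icc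
  have taylor := taylor_integral_remainder_Icc hf hx
  simp only [taylor_within_apply, smul_eq_mul] at taylor
  rw [integral_mul_integral_eq_convolution hxI hxL,
    convolution_lsmul_assoc_of_bounded hg.integrable_indicator_Icc hC
      (integrable_indicator_Icc_of_integrableOn_Ioc hkI)
      (integrable_indicator_Icc_of_integrableOn_Ioc hκI),
    convolution_lsmul_comm ((Icc 0 (b - a)).indicator k),
    convolution_indicator_Icc_convolution (fun y hy => hSonine y hy.1 hy.2) hxI hxL,
    Nat.add_sub_cancel, ← taylor]
  exact congrArg _ (Finset.sum_congr rfl fun j _ => by ring)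

/-- **Second fundamental theorem of general fractional calculus, left Caputo case.**
If `(k, κ)` satisfy the modified Sonine condition of order `n` on `(0, b-a]`, then for
every `n`-times continuously differentiable `f : [a,b] → ℝ` and every `x ∈ (a, b]`,
`I_κ (ᶜD_k f)(x) = f(x) − Σ_{j<n} f⁽ʲ⁾(a) (x-a)ʲ/j!`. -/
theorem second_fundamental_left_caputo
    (a b : ℝ) (hab : a < b) (n : ℕ) (hn : 1 ≤ n)
    (k κ : ℝ → ℝ) (hkm : Measurable k) (hκm : Measurable κ)
    (hkI : IntegrableOn k (Ioc 0 (b - a)))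
    (hκI : IntegrableOn κ (Ioc 0 (b - a)))
    (hSonine : ∀ y, 0 < y → y ≤ b - a →
      ∫ s in (0:ℝ)..y, k (y - s) * κ s = y ^ (n - 1) / (n - 1).factorial)
    (f : ℝ → ℝ) (hf : ContDiffOn ℝ n f (Icc a b)) :
    ∀ x ∈ Ioc a b,
      (∫ s in a..x, κ (x - s) *
          (∫ u in a..s, k (s - u) * iteratedDerivWithin n f (Icc a b) u)) =
        f x - ∑ j ∈ Finset.range n,
          iteratedDerivWithin j f (Icc a b) a * (x - a) ^ j / j.factorial :=
  second_fundamental_left_caputo_general a b n hn k κ hkI hκI hSonine f hf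
end

section
/- Let α, β > −1 and let k, κ : ℝ → ℝ be measurable, integrable on (0, 1], satisfying the Sonine condition ∫_0^x k(x−t) κ(t) dt = 1 for all 0 < x ≤ 1. Let φ_n(x) = ∫_0^x κ(x−t) P̃_n^{α,β}(t) dt be the n-th left Jacobi convolution series. Then φ_n(0) = 0 (indeed φ_n(x) → 0 as x → 0⁺), and for every x ∈ (0,1] the general fractional Riemann–Liouville derivative of φ_n exists and equals the shifted Jacobi polynomial: (d/dx) ∫_0^x k(x−s) φ_n(s) ds = P̃_n^{α,β}(x). -/
open MeasureTheory intervalIntegral Set Filter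

/-- The Jacobi polynomial `P_n^{α,β}` on `[-1,1]`, written via the Euler Gamma function. -/
noncomputable def jacobiP (α β : ℝ) (n : ℕ) (x : ℝ) : ℝ :=
  (2 : ℝ) ^ (-(n : ℤ)) * ∑ k ∈ Finset.range (n + 1),
    (Real.Gamma ((n : ℝ) + α + 1) /
        (Real.Gamma ((k : ℝ) + 1) * Real.Gamma ((n : ℝ) + α - (k : ℝ) + 1))) *
      (Real.Gamma ((n : ℝ) + β + 1) /
        (Real.Gamma ((n : ℝ) - (k : ℝ) + 1) * Real.Gamma (β + (k : ℝ) + 1))) *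
      (x - 1) ^ (n - k) * (x + 1) ^ k

/-- The shifted Jacobi polynomial `P̃_n^{α,β}` on `[0,1]`. -/
noncomputable def shiftedJacobiP (α β : ℝ) (n : ℕ) (x : ℝ) : ℝ :=
  jacobiP α β n (2 * x - 1)

/-- The `n`-th left Jacobi convolution series `φ_n(x) = ∫_0^x κ(x-t) P̃_n^{α,β}(t) dt`. -/
noncomputable def leftJacobiConv (κ : ℝ → ℝ) (α β : ℝ) (n : ℕ) (x : ℝ) : ℝ :=
  ∫ t in (0:ℝ)..x, κ (x - t) * shiftedJacobiP α β n t

open scoped Convolution Topology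
open ContinuousLinearMap (lsmul)
open Function (support)

/-!
Write `f ⋆₊ g` for Mathlib's causal convolution `x ↦ ∫₀ˣ f t g (x - t) dt`, so that
`φ_n = κ ⋆₊ P̃_n`. At points of `(0, 1]` it only sees the values of its factors on `(0, 1]`, so
after truncating `k`, `κ`, `P̃_n` to `(0, 1]` it becomes a two-sided convolution of integrable
functions, one of them bounded, and two-sided convolution is associative. Hence on `(0, 1]`
`k ⋆₊ φ_n = (k ⋆₊ κ) ⋆₊ P̃_n = 1 ⋆₊ P̃_n = ∫₀ˣ P̃_n` by the Sonine condition, and the fundamental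
theorem of calculus gives the derivative. Finally `|φ_n x| ≤ sup |P̃_n| · ∫₀ˣ |κ| → 0`.
-/

local notation:67 f " ⋆₊ " g:66 => posConvolution f g (lsmul ℝ ℝ) volume

lemma continuous_shiftedJacobiP (α β : ℝ) (n : ℕ) : Continuous (shiftedJacobiP α β n) := by
  unfold shiftedJacobiP jacobiP; fun_prop

section Convolution

variable {G : Type*} [MeasurableSpace G] [AddCommGroup G] [MeasurableAdd₂ G] [MeasurableNeg G]
  {μ : Measure G} [SFinite μ] [μ.IsAddLeftInvariant] [μ.IsAddRightInvariant]

theorem convolution_assoc_of_integrable_of_bounded {f g h : G → ℝ} {C : ℝ}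
    (hf : Integrable f μ) (hg : Integrable g μ) (hh : AEStronglyMeasurable h μ)
    (hC : ∀ x, ‖h x‖ ≤ C) (x : G) :
    ((f ⋆[lsmul ℝ ℝ, μ] g) ⋆[lsmul ℝ ℝ, μ] h) x = (f ⋆[lsmul ℝ ℝ, μ] (g ⋆[lsmul ℝ ℝ, μ] h)) x := by
  set H := (fun x => ‖g x‖) ⋆[ContinuousLinearMap.mul ℝ ℝ, μ] fun x => ‖h x‖
  have hgH : ∀ y, ConvolutionExistsAt (fun x => ‖g x‖) (fun x => ‖h x‖) y
      (ContinuousLinearMap.mul ℝ ℝ) μ := fun y =>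
    BddAbove.convolutionExistsAt _ ⟨C, forall_mem_image.2 fun t _ => by simpa using hC t⟩
      MeasurableSet.univ (subset_univ _) hg.norm.integrableOn hh.norm
  have hH : ∀ y, ‖H y‖ ≤ (∫ t, ‖g t‖ ∂μ) * C := fun y => by
    rw [← MeasureTheory.integral_mul_const]
    refine norm_integral_le_of_norm_le (hg.norm.mul_const C) (Eventually.of_forall fun t => ?_)
    simp only [ContinuousLinearMap.mul_apply', norm_mul, norm_norm]
    exact mul_le_mul_of_nonneg_left (hC _) (norm_nonneg _)
  refine convolution_assoc _ _ _ _ (fun a b c => smul_assoc a b c) hf.aestronglyMeasurable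
    hg.aestronglyMeasurable hh (hf.ae_convolution_exists _ hg) (Eventually.of_forall hgH) ?_
  exact BddAbove.convolutionExistsAt _ ⟨_, forall_mem_image.2 fun y _ => hH y⟩
    MeasurableSet.univ (subset_univ _) hf.norm.integrableOn
    (hg.norm.aestronglyMeasurable.convolution_integrand _ hh.norm).integral_prod_right'

end Convolution

section PosConvolution

variable {E E' F : Type*} [NormedAddCommGroup E] [NormedAddCommGroup E'] [NormedAddCommGroup F]
  [NormedSpace ℝ E] [NormedSpace ℝ E'] [NormedSpace ℝ F]

theorem convolution_eq_posConvolution {f : ℝ → E} {g : ℝ → E'} (L : E →L[ℝ] E' →L[ℝ] F)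
    (ν : Measure ℝ) [NullSingletonClass ν] (hf : support f ⊆ Ioi 0) (hg : support g ⊆ Ioi 0) :
    f ⋆[L, ν] g = posConvolution f g L ν := by
  rw [posConvolution_eq_convolution_indicator f g L ν, indicator_eq_self.2 hf,
    indicator_eq_self.2 hg]

theorem support_posConvolution_subset (f : ℝ → E) (g : ℝ → E') (L : E →L[ℝ] E' →L[ℝ] F)
    (ν : Measure ℝ) : support (posConvolution f g L ν) ⊆ Ioi 0 :=
  support_indicator_subset

theorem posConvolution_congr_of_eqOn {f f' : ℝ → E} {g g' : ℝ → E'} {L : E →L[ℝ] E' →L[ℝ] F}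
    {ν : Measure ℝ} [NullSingletonClass ν] {a x : ℝ} (hx : x ≤ a) (hf : EqOn f f' (Ioo 0 a))
    (hg : EqOn g g' (Ioo 0 a)) :
    posConvolution f g L ν x = posConvolution f' g' L ν x := by
  unfold posConvolution
  by_cases hx₀ : 0 < x
  · simp only [indicator_of_mem (mem_Ioi.2 hx₀)]
    refine intervalIntegral.integral_congr_ae ?_
    filter_upwards [ν.ae_ne x] with t htx ht
    rw [uIoc_of_le hx₀.le] at ht
    have hlt : t < x := lt_of_le_of_ne ht.2 htx
    rw [hf ⟨ht.1, hlt.trans_le hx⟩, hg ⟨sub_pos.2 hlt, by linarith [ht.1]⟩]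
  · simp only [indicator_of_notMem (notMem_Ioi.2 (not_lt.1 hx₀))]

theorem convolution_indicator_Ioc_eq_posConvolution {f : ℝ → E} {g : ℝ → E'}
    (L : E →L[ℝ] E' →L[ℝ] F) (ν : Measure ℝ) [NullSingletonClass ν] {a x : ℝ} (hx : x ≤ a) :
    ((Ioc 0 a).indicator f ⋆[L, ν] (Ioc 0 a).indicator g) x = posConvolution f g L ν x := by
  rw [convolution_eq_posConvolution L ν (support_indicator_subset.trans Ioc_subset_Ioi_self)
    (support_indicator_subset.trans Ioc_subset_Ioi_self)]
  exact posConvolution_congr_of_eqOn hx (fun t ht => indicator_of_mem (Ioo_subset_Ioc_self ht) f)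
    (fun t ht => indicator_of_mem (Ioo_subset_Ioc_self ht) g)

end PosConvolution

theorem posConvolution_lsmul_apply {f g : ℝ → ℝ} {x : ℝ} (hx : 0 ≤ x) :
    (f ⋆₊ g) x = ∫ t in 0..x, f (x - t) * g t := by
  rcases hx.eq_or_lt with rfl | hx
  · simp [posConvolution]
  · simp only [posConvolution, indicator_of_mem (mem_Ioi.2 hx), ContinuousLinearMap.lsmul_apply,
      smul_eq_mul]
    simpa [mul_comm] using (intervalIntegral.integral_comp_sub_left
      (fun t => f t * g (x - t)) x (a := 0) (b := x)).symm

theorem tendsto_posConvolution_nhdsGT_zero {f g : ℝ → ℝ} {a C : ℝ} (ha : 0 < a)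
    (hf : IntegrableOn f (Ioc 0 a)) (hgC : ∀ t ∈ Ico 0 a, ‖g t‖ ≤ C) :
    Tendsto (f ⋆₊ g) (𝓝[>] 0) (𝓝 0) := by
  have hf' : ∀ {x}, 0 ≤ x → x ≤ a → IntervalIntegrable (fun t => ‖f t‖) volume 0 x :=
    fun hx hxa => ((intervalIntegrable_iff_integrableOn_Ioc_of_le hx).2
      (hf.mono_set (Ioc_subset_Ioc_right hxa))).norm
  have hprimitive : Tendsto (fun x => ∫ t in 0..x, ‖f t‖) (𝓝[>] 0) (𝓝 0) := by
    have hcont := continuousWithinAt_primitive (μ := volume) (a := 0) (b₀ := 0) (b₁ := 0) (b₂ := a)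
      (by simp) (by rw [min_self, max_eq_right ha.le]; exact hf' ha.le le_rfl)
    simpa using (hcont.mono_of_mem_nhdsWithin (Icc_mem_nhdsGT ha)).tendsto
  refine squeeze_zero_norm' ?_ (by simpa using hprimitive.mul_const C)
  filter_upwards [Ioo_mem_nhdsGT ha] with x hx
  rw [posConvolution, indicator_of_mem (mem_Ioi.2 hx.1), ← intervalIntegral.integral_mul_const]
  refine intervalIntegral.norm_integral_le_of_norm_le hx.1.le (ae_of_all _ fun t ht => ?_)
    ((hf' hx.1.le hx.2.le).mul_const C)
  rw [ContinuousLinearMap.lsmul_apply, norm_smul]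
  exact mul_le_mul_of_nonneg_left (hgC _ ⟨by linarith [ht.2], by linarith [ht.1, hx.2]⟩)
    (norm_nonneg _)

theorem posConvolution_posConvolution_eq_integral_of_sonine {k κ g : ℝ → ℝ} {a C x : ℝ}
    (hk : IntegrableOn k (Ioc 0 a)) (hκ : IntegrableOn κ (Ioc 0 a))
    (hg : IntegrableOn g (Ioc 0 a)) (hgC : ∀ t ∈ Ioc 0 a, ‖g t‖ ≤ C)
    (hsonine : ∀ t ∈ Ioo 0 a, (k ⋆₊ κ) t = 1) (hx : x ∈ Ioc 0 a) :
    (k ⋆₊ (κ ⋆₊ g)) x = ∫ t in 0..x, g t := by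
  set k₀ := (Ioc 0 a).indicator k
  set κ₀ := (Ioc 0 a).indicator κ
  set g₀ := (Ioc 0 a).indicator g
  have hsupp : ∀ u : ℝ → ℝ, support ((Ioc 0 a).indicator u) ⊆ Ioi 0 :=
    fun _ => support_indicator_subset.trans Ioc_subset_Ioi_self
  have heqOn : ∀ u : ℝ → ℝ, EqOn u ((Ioc 0 a).indicator u) (Ioo 0 a) :=
    fun u _ ht => (indicator_of_mem (Ioo_subset_Ioc_self ht) u).symm
  have hsupp_convolution : ∀ u v : ℝ → ℝ,
      support ((Ioc 0 a).indicator u ⋆ (Ioc 0 a).indicator v) ⊆ Ioi 0 := fun u v => by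
    rw [convolution_eq_posConvolution _ _ (hsupp u) (hsupp v)]
    exact support_posConvolution_subset _ _ _ _
  have hg₀C : ∀ t, ‖g₀ t‖ ≤ max C 0 := fun t => by
    dsimp only [g₀]
    by_cases ht : t ∈ Ioc 0 a
    · rw [indicator_of_mem ht]; exact le_max_of_le_left (hgC t ht)
    · rw [indicator_of_notMem ht, norm_zero]; exact le_max_right _ _
  calc (k ⋆₊ (κ ⋆₊ g)) x = (k₀ ⋆₊ (κ₀ ⋆ g₀)) x :=
        posConvolution_congr_of_eqOn hx.2 (heqOn k) fun t ht =>
          (convolution_indicator_Ioc_eq_posConvolution _ _ ht.2.le).symm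
    _ = (k₀ ⋆ (κ₀ ⋆ g₀)) x := by
        rw [convolution_eq_posConvolution _ _ (hsupp k) (hsupp_convolution κ g)]
    _ = ((k₀ ⋆ κ₀) ⋆ g₀) x :=
        (convolution_assoc_of_integrable_of_bounded
          ((integrable_indicator_iff measurableSet_Ioc).2 hk)
          ((integrable_indicator_iff measurableSet_Ioc).2 hκ)
          ((integrable_indicator_iff measurableSet_Ioc).2 hg).aestronglyMeasurable hg₀C x).symm
    _ = ((fun _ => 1) ⋆₊ g) x := by
        rw [convolution_eq_posConvolution _ _ (hsupp_convolution k κ) (hsupp g)]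
        exact posConvolution_congr_of_eqOn hx.2 (fun t ht =>
          (convolution_indicator_Ioc_eq_posConvolution _ _ ht.2.le).trans (hsonine t ht))
          (heqOn g).symm
    _ = ∫ t in 0..x, g t := by
        rw [posConvolution_lsmul_apply hx.1.le]
        simp

theorem gfd_leftJacobiConv_eq_shiftedJacobiP_general
    (α β : ℝ) (n : ℕ)
    (k κ : ℝ → ℝ)
    (hkI : IntegrableOn k (Ioc 0 1))
    (hκI : IntegrableOn κ (Ioc 0 1))
    (hSonine : ∀ x : ℝ, 0 < x → x ≤ 1 → ∫ t in (0:ℝ)..x, k (x - t) * κ t = 1) :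
    leftJacobiConv κ α β n 0 = 0 ∧
    Tendsto (leftJacobiConv κ α β n) (nhdsWithin 0 (Ioi 0)) (nhds 0) ∧
    ∀ x ∈ Ioc (0:ℝ) 1,
      HasDerivWithinAt (fun t => ∫ s in (0:ℝ)..t, k (t - s) * leftJacobiConv κ α β n s)
        (shiftedJacobiP α β n x) (Icc 0 1) x := by
  set P := shiftedJacobiP α β n
  have hP : Continuous P := continuous_shiftedJacobiP α β n
  obtain ⟨C, hC⟩ := isCompact_Icc.exists_bound_of_continuousOn (hP.continuousOn (s := Icc 0 1))
  have hφ : ∀ x, 0 ≤ x → leftJacobiConv κ α β n x = (κ ⋆₊ P) x :=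
    fun x hx => (posConvolution_lsmul_apply hx).symm
  have hprimitive : ∀ τ ∈ Icc (0:ℝ) 1,
      ∫ s in 0..τ, k (τ - s) * leftJacobiConv κ α β n s = ∫ u in 0..τ, P u := by
    rintro τ ⟨hτ₀, hτ₁⟩
    rcases hτ₀.eq_or_lt with rfl | hτ₀
    · simp
    rw [← posConvolution_lsmul_apply hτ₀.le,
      posConvolution_congr_of_eqOn hτ₁ (fun _ _ => rfl) fun s hs => hφ s hs.1.le]
    exact posConvolution_posConvolution_eq_integral_of_sonine hkI hκI
      (hP.continuousOn.integrableOn_Icc.mono_set Ioc_subset_Icc_self)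
      (fun t ht => hC t (Ioc_subset_Icc_self ht))
      (fun t ht => (posConvolution_lsmul_apply ht.1.le).trans (hSonine t ht.1 ht.2.le)) ⟨hτ₀, hτ₁⟩
  refine ⟨intervalIntegral.integral_same, ?_, fun x hx => ?_⟩
  · refine (tendsto_posConvolution_nhdsGT_zero one_pos hκI
      fun t ht => hC t (Ico_subset_Icc_self ht)).congr' ?_
    filter_upwards [self_mem_nhdsWithin] with x hx using (hφ x (le_of_lt hx)).symm
  · exact (hP.integral_hasStrictDerivAt 0 x).hasDerivAt.hasDerivWithinAt.congr hprimitive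
      (hprimitive x (Ioc_subset_Icc_self hx))

/-- **The general fractional derivative of the left Jacobi convolution series is the
shifted Jacobi polynomial.** For a Sonine pair `(k, κ)` on `(0,1]`, the `n`-th left
Jacobi convolution series `φ_n` satisfies `φ_n(0) = 0` (indeed `φ_n(x) → 0` as
`x → 0⁺`), and for every `x ∈ (0,1]` the general fractional Riemann–Liouville
derivative `(d/dx) ∫_0^x k(x-s) φ_n(s) ds` exists and equals `P̃_n^{α,β}(x)`. -/
theorem gfd_leftJacobiConv_eq_shiftedJacobiP
    (α β : ℝ) (hα : -1 < α) (hβ : -1 < β) (n : ℕ)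
    (k κ : ℝ → ℝ) (hkm : Measurable k) (hκm : Measurable κ)
    (hkI : IntegrableOn k (Ioc 0 1))
    (hκI : IntegrableOn κ (Ioc 0 1))
    (hSonine : ∀ x : ℝ, 0 < x → x ≤ 1 → ∫ t in (0:ℝ)..x, k (x - t) * κ t = 1) :
    leftJacobiConv κ α β n 0 = 0 ∧
    Tendsto (leftJacobiConv κ α β n) (nhdsWithin 0 (Ioi 0)) (nhds 0) ∧
    ∀ x ∈ Ioc (0:ℝ) 1,
      HasDerivWithinAt (fun t => ∫ s in (0:ℝ)..t, k (t - s) * leftJacobiConv κ α β n s)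
        (shiftedJacobiP α β n x) (Icc 0 1) x :=
  gfd_leftJacobiConv_eq_shiftedJacobiP_general α β n k κ hkI hκI hSonine
end
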